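/- arXiv:2407.00868 — 6 statements merged into one kernel-verified Lean document; each statement's English description precedes it below -/
import Mathlib

section
/- If β√(a(N)/N) ≤ √(2 ln 2), then E[ max_{v ∈ {0,1}^N} e^{β X_v} ] ≤ 2 e^{β √(2 ln 2 · N · a(N))}. -/
open MeasureTheory ProbabilityTheory Real

/-- The CREM energy of a vertex `v` (a list of bits): the sum of the edge variables
along the path from the root to `v`. -/
noncomputable def cremX {Ω : Type*} (Y : List Bool → Ω → ℝ) (v : List Bool) (ω : Ω) : ℝ :=
  ∑ m ∈ Finset.Icc 1 v.length, Y (v.take m) ω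

/-- The CREM partition function at depth `n`. -/
noncomputable def cremZ {Ω : Type*} (Y : List Bool → Ω → ℝ) (β : ℝ) (n : ℕ) (ω : Ω) : ℝ :=
  ∑ f : Fin n → Bool, Real.exp (β * cremX Y (List.ofFn f) ω)

/-- The normalized CREM partition function at depth `n`. -/
noncomputable def cremZhat {Ω : Type*} (a : ℕ → ℝ) (Y : List Bool → Ω → ℝ) (β : ℝ) (n : ℕ)
    (ω : Ω) : ℝ :=
  cremZ Y β n ω / (2 ^ n * Real.exp (β ^ 2 * a n / 2))

open scoped ENNReal NNReal

/-! For every `b ≥ β`, `max_v e^{β X_v} ≤ Z_b^{β/b}` with `Z_b = ∑_v e^{b X_v}`, and since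
`x ↦ x^{β/b}` is concave, `E[Z_b^{β/b}] ≤ (E Z_b)^{β/b} = (2^N e^{b² a(N)/2})^{β/b}`.
The optimal choice `b = c / a(N)` with `c = √(2 ln 2 · N · a(N))` is admissible exactly when
`β √(a(N)/N) ≤ √(2 ln 2)` and gives the bound `e^{β c}`. If `a(N) = 0`, taking `b = β (N + 1)`
leaves `e^{N ln 2 / (N + 1)} ≤ 2`. -/

lemma Finset.sup'_exp_mul_le_rpow_sum_exp {ι : Type*} (s : Finset ι) (hs : s.Nonempty)
    (x : ι → ℝ) {β b : ℝ} (hβ : 0 ≤ β) (hb : 0 < b) :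
    s.sup' hs (fun i => rexp (β * x i)) ≤ (∑ i ∈ s, rexp (b * x i)) ^ (β / b) := by
  refine Finset.sup'_le _ _ fun i hi => ?_
  calc rexp (β * x i) = rexp (b * x i) ^ (β / b) := by
        rw [← Real.exp_mul]; congr 1; field_simp
    _ ≤ (∑ i ∈ s, rexp (b * x i)) ^ (β / b) :=
        Real.rpow_le_rpow (Real.exp_pos _).le
          (Finset.single_le_sum (fun j _ => (Real.exp_pos (b * x j)).le) hi) (by positivity)

lemma MeasureTheory.lintegral_rpow_le_rpow_lintegral {α : Type*} [MeasurableSpace α]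
    {μ : Measure α} [IsProbabilityMeasure μ] {F : α → ℝ≥0∞} (hF : AEMeasurable F μ)
    {θ : ℝ} (hθ0 : 0 < θ) (hθ1 : θ ≤ 1) :
    ∫⁻ x, F x ^ θ ∂μ ≤ (∫⁻ x, F x ∂μ) ^ θ := by
  have h := eLpNorm'_le_eLpNorm'_of_exponent_le hθ0 hθ1 μ hF.aestronglyMeasurable
  simp only [eLpNorm', enorm_eq_self, ENNReal.rpow_one, div_one, one_div] at h
  calc ∫⁻ x, F x ^ θ ∂μ = ((∫⁻ x, F x ^ θ ∂μ) ^ θ⁻¹) ^ θ := by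
        rw [← ENNReal.rpow_mul, inv_mul_cancel₀ hθ0.ne', ENNReal.rpow_one]
    _ ≤ (∫⁻ x, F x ∂μ) ^ θ := ENNReal.rpow_le_rpow h hθ0.le

lemma ProbabilityTheory.iIndepFun.mgf_sum_of_map_eq_gaussianReal {Ω ι : Type*}
    [MeasurableSpace Ω] {P : Measure Ω} {X : ι → Ω → ℝ} (hind : iIndepFun X P)
    (hmeas : ∀ i, Measurable (X i)) {v : ι → ℝ≥0} (hX : ∀ i, P.map (X i) = gaussianReal 0 (v i))
    (s : Finset ι) (t : ℝ) :
    mgf (∑ i ∈ s, X i) P t = rexp ((∑ i ∈ s, (v i : ℝ)) * t ^ 2 / 2) := by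
  rw [hind.mgf_sum hmeas, Finset.sum_mul, Finset.sum_div, Real.exp_sum]
  refine Finset.prod_congr rfl fun i _ => ?_
  rw [mgf_gaussianReal (hX i), zero_mul, zero_add]

lemma cremX_ofFn {Ω : Type*} {N : ℕ} (Y : List Bool → Ω → ℝ) (f : Fin N → Bool) :
    cremX Y (List.ofFn f) = ∑ i : Fin N, Y ((List.ofFn f).take (i + 1)) := by
  funext ω
  rw [cremX, List.length_ofFn, Finset.sum_apply, Fin.sum_univ_eq_sum_range
    (fun i => Y ((List.ofFn f).take (i + 1)) ω), Finset.range_eq_Ico,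
    Finset.sum_Ico_add' (fun m => Y ((List.ofFn f).take m) ω), zero_add,
    Finset.Ico_add_one_right_eq_Icc]

structure IsCREMDisorder (N : ℕ) (a : ℕ → ℝ) {Ω : Type*} [MeasurableSpace Ω] (P : Measure Ω)
    (Y : List Bool → Ω → ℝ) : Prop where
  map_zero : a 0 = 0
  monotone : ∀ ⦃m n : ℕ⦄, m ≤ n → n ≤ N → a m ≤ a n
  measurable : ∀ u, Measurable (Y u)
  iIndepFun : iIndepFun (fun u : {u : List Bool // 1 ≤ u.length ∧ u.length ≤ N} => Y u.1) P
  map_eq_gaussianReal : ∀ u : List Bool, 1 ≤ u.length → u.length ≤ N →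
    P.map (Y u) = gaussianReal 0 (Real.toNNReal (a u.length - a (u.length - 1)))

namespace IsCREMDisorder

variable {N : ℕ} {a : ℕ → ℝ} {Ω : Type*} [MeasurableSpace Ω] {P : Measure Ω}
  {Y : List Bool → Ω → ℝ}

lemma mgf_cremX_ofFn (hY : IsCREMDisorder N a P Y) (f : Fin N → Bool) (t : ℝ) :
    mgf (cremX Y (List.ofFn f)) P t = rexp (t ^ 2 * a N / 2) := by
  have hlen (i : Fin N) : ((List.ofFn f).take (i + 1)).length = i + 1 := by
    simp [Nat.succ_le_of_lt i.isLt]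
  let edge : Fin N → {u : List Bool // 1 ≤ u.length ∧ u.length ≤ N} := fun i =>
    ⟨(List.ofFn f).take (i + 1), by rw [hlen]; exact ⟨by omega, i.isLt⟩⟩
  have hedge : Function.Injective edge := fun i j hij => by
    have := congrArg (fun u => u.1.length) hij
    simp only [edge, hlen] at this
    exact Fin.ext (by omega)
  have hvar (i : Fin N) : P.map (Y (edge i).1)
      = gaussianReal 0 (Real.toNNReal (a (i + 1) - a i)) := by
    rw [hY.map_eq_gaussianReal _ (edge i).2.1 (edge i).2.2]
    simp only [edge, hlen, Nat.add_sub_cancel]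
  have htelescope : ∑ i : Fin N, ((a (i + 1) - a i).toNNReal : ℝ) = a N := by
    rw [Fin.sum_univ_eq_sum_range (fun i => ((a (i + 1) - a i).toNNReal : ℝ)),
      Finset.sum_congr rfl fun i hi => Real.coe_toNNReal _
        (sub_nonneg.2 (hY.monotone i.le_succ (Finset.mem_range.1 hi))),
      Finset.sum_range_sub, hY.map_zero, sub_zero]
  rw [cremX_ofFn, (hY.iIndepFun.precomp hedge).mgf_sum_of_map_eq_gaussianReal
    (fun i => hY.measurable _) hvar, htelescope, mul_comm]

variable [IsProbabilityMeasure P]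

lemma integrable_exp_mul_cremX_ofFn (hY : IsCREMDisorder N a P Y) (f : Fin N → Bool) (t : ℝ) :
    Integrable (fun ω => rexp (t * cremX Y (List.ofFn f) ω)) P :=
  mgf_pos_iff.mp (by rw [hY.mgf_cremX_ofFn]; exact Real.exp_pos _)

lemma integral_cremZ (hY : IsCREMDisorder N a P Y) (t : ℝ) :
    ∫ ω, cremZ Y t N ω ∂P = 2 ^ N * rexp (t ^ 2 * a N / 2) := by
  simp only [cremZ]
  have hmgf (f : Fin N → Bool) :
      ∫ ω, rexp (t * cremX Y (List.ofFn f) ω) ∂P = rexp (t ^ 2 * a N / 2) :=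
    hY.mgf_cremX_ofFn f t
  rw [integral_finsetSum _ fun f _ => hY.integrable_exp_mul_cremX_ofFn f t]
  simp [hmgf]

lemma lintegral_sup'_exp_le (hY : IsCREMDisorder N a P Y) {β b : ℝ} (hβ : 0 < β)
    (hβb : β ≤ b) :
    ∫⁻ ω, ENNReal.ofReal ((Finset.univ : Finset (Fin N → Bool)).sup'
        Finset.univ_nonempty (fun f => rexp (β * cremX Y (List.ofFn f) ω))) ∂P
      ≤ ENNReal.ofReal (rexp (β / b * (N * Real.log 2 + b ^ 2 * a N / 2))) := by
  have hb : 0 < b := hβ.trans_le hβb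
  have hθ : 0 < β / b := div_pos hβ hb
  have hZ_nonneg (ω : Ω) : 0 ≤ cremZ Y b N ω :=
    Finset.sum_nonneg fun f _ => (Real.exp_pos _).le
  have hZ_meas : Measurable (cremZ Y b N) := by
    have := hY.measurable
    unfold cremZ cremX
    fun_prop
  calc _ ≤ ∫⁻ ω, ENNReal.ofReal (cremZ Y b N ω) ^ (β / b) ∂P := by
        refine lintegral_mono fun ω => ?_
        rw [ENNReal.ofReal_rpow_of_nonneg (hZ_nonneg ω) hθ.le]
        exact ENNReal.ofReal_le_ofReal
          (Finset.sup'_exp_mul_le_rpow_sum_exp _ _ _ hβ.le hb)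
    _ ≤ (∫⁻ ω, ENNReal.ofReal (cremZ Y b N ω) ∂P) ^ (β / b) :=
        lintegral_rpow_le_rpow_lintegral hZ_meas.ennreal_ofReal.aemeasurable hθ
          ((div_le_one hb).2 hβb)
    _ = ENNReal.ofReal ((2 ^ N * rexp (b ^ 2 * a N / 2)) ^ (β / b)) := by
        rw [← ofReal_integral_eq_lintegral_ofReal _ (ae_of_all _ hZ_nonneg), hY.integral_cremZ,
          ENNReal.ofReal_rpow_of_nonneg (by positivity) hθ.le]
        exact integrable_finsetSum _ fun f _ => hY.integrable_exp_mul_cremX_ofFn f b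
    _ = _ := by
        rw [← Real.exp_log (two_pos (α := ℝ)), ← Real.exp_nat_mul, ← Real.exp_add,
          ← Real.exp_mul, Real.exp_log two_pos, mul_comm]

end IsCREMDisorder

lemma div_mul_add_one_mul_le {β n L : ℝ} (hβ : 0 < β) (hn : 0 ≤ n) (hL : 0 ≤ L) :
    β / (β * (n + 1)) * (n * L) ≤ L := by
  rw [div_mul_eq_mul_div, div_le_iff₀ (by positivity)]
  nlinarith

lemma le_sqrt_mul_div_of_mul_sqrt_div_le {β n A κ : ℝ} (hn : 0 < n) (hA : 0 < A) (hκ : 0 ≤ κ)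
    (hβ : 0 < β) (h : β * √(A / n) ≤ √κ) :
    β ≤ √(κ * n * A) / A := by
  have hsq : β ^ 2 * A ≤ κ * n := by
    have := pow_le_pow_left₀ (by positivity) h 2
    rwa [mul_pow, Real.sq_sqrt (by positivity), Real.sq_sqrt hκ, mul_div_assoc',
      div_le_iff₀ hn] at this
  rw [le_div_iff₀ hA, Real.le_sqrt (by positivity) (by positivity)]
  nlinarith [mul_le_mul_of_nonneg_right hsq hA.le]

lemma div_mul_add_sq_mul_div_two_eq {β n L A : ℝ} (hn : 0 < n) (hL : 0 < L) (hA : 0 < A) :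
    β / (√(2 * L * n * A) / A) * (n * L + (√(2 * L * n * A) / A) ^ 2 * A / 2)
      = β * √(2 * L * n * A) := by
  have hc : √(2 * L * n * A) ^ 2 = 2 * L * n * A := Real.sq_sqrt (by positivity)
  have hc0 : 0 < √(2 * L * n * A) := Real.sqrt_pos.2 (by positivity)
  generalize √(2 * L * n * A) = c at hc hc0 ⊢
  field_simp
  rw [hc]
  ring

theorem crem_expected_max_exp_le_general
    (N : ℕ) (a : ℕ → ℝ) (ha0 : a 0 = 0)
    (haMono : ∀ ⦃m n : ℕ⦄, m ≤ n → n ≤ N → a m ≤ a n)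
    {Ω : Type*} [MeasurableSpace Ω] (P : Measure Ω) [IsProbabilityMeasure P]
    (Y : List Bool → Ω → ℝ) (hmeas : ∀ u, Measurable (Y u))
    (hIndep : iIndepFun
      (fun u : {u : List Bool // 1 ≤ u.length ∧ u.length ≤ N} => Y u.1) P)
    (hGauss : ∀ u : List Bool, 1 ≤ u.length → u.length ≤ N →
      P.map (Y u) = gaussianReal 0 (Real.toNNReal (a u.length - a (u.length - 1))))
    (β : ℝ) (hβ : 0 < β)
    (hβ2 : β * Real.sqrt (a N / N) ≤ Real.sqrt (2 * Real.log 2)) :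
    ∫⁻ ω, ENNReal.ofReal ((Finset.univ : Finset (Fin N → Bool)).sup'
        Finset.univ_nonempty (fun f => Real.exp (β * cremX Y (List.ofFn f) ω))) ∂P
      ≤ ENNReal.ofReal (2 * Real.exp (β * Real.sqrt (2 * Real.log 2 * N * a N))) := by
  have hY : IsCREMDisorder N a P Y := ⟨ha0, haMono, hmeas, hIndep, hGauss⟩
  have hlog2 : 0 < Real.log 2 := Real.log_pos one_lt_two
  rcases (ha0 ▸ haMono N.zero_le le_rfl : 0 ≤ a N).eq_or_lt with haN | haN
  · refine (hY.lintegral_sup'_exp_le hβ (b := β * (N + 1)) (by nlinarith)).trans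
      (ENNReal.ofReal_le_ofReal ?_)
    simp only [← haN, mul_zero, zero_div, add_zero, Real.sqrt_zero, Real.exp_zero, mul_one]
    calc _ ≤ rexp (Real.log 2) :=
          Real.exp_le_exp.2 (div_mul_add_one_mul_le hβ N.cast_nonneg hlog2.le)
      _ = 2 := Real.exp_log two_pos
  · have hN : (0 : ℝ) < N := Nat.cast_pos.2 <| Nat.pos_of_ne_zero fun h => by
      subst h; exact haN.ne' ha0
    refine (hY.lintegral_sup'_exp_le hβ
      (le_sqrt_mul_div_of_mul_sqrt_div_le hN haN (by positivity) hβ hβ2)).trans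
      (ENNReal.ofReal_le_ofReal ?_)
    rw [div_mul_add_sq_mul_div_two_eq hN hlog2 haN]
    linarith [Real.exp_pos (β * √(2 * Real.log 2 * N * a N))]

/-- If `β √(a(N)/N) ≤ √(2 ln 2)`, then
`E[max_{v ∈ {0,1}^N} e^{β X_v}] ≤ 2 e^{β √(2 ln 2 · N · a(N))}`. -/
theorem crem_expected_max_exp_le
    (N : ℕ) (hN : 1 ≤ N) (a : ℕ → ℝ) (ha0 : a 0 = 0)
    (haMono : ∀ ⦃m n : ℕ⦄, m ≤ n → n ≤ N → a m ≤ a n)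
    {Ω : Type*} [MeasurableSpace Ω] (P : Measure Ω) [IsProbabilityMeasure P]
    (Y : List Bool → Ω → ℝ) (hmeas : ∀ u, Measurable (Y u))
    (hIndep : iIndepFun
      (fun u : {u : List Bool // 1 ≤ u.length ∧ u.length ≤ N} => Y u.1) P)
    (hGauss : ∀ u : List Bool, 1 ≤ u.length → u.length ≤ N →
      P.map (Y u) = gaussianReal 0 (Real.toNNReal (a u.length - a (u.length - 1))))
    (β : ℝ) (hβ : 0 < β)
    (hβ2 : β * Real.sqrt (a N / N) ≤ Real.sqrt (2 * Real.log 2)) :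
    ∫⁻ ω, ENNReal.ofReal ((Finset.univ : Finset (Fin N → Bool)).sup'
        Finset.univ_nonempty (fun f => Real.exp (β * cremX Y (List.ofFn f) ω))) ∂P
      ≤ ENNReal.ofReal (2 * Real.exp (β * Real.sqrt (2 * Real.log 2 * N * a N))) :=
  crem_expected_max_exp_le_general N a ha0 haMono P Y hmeas hIndep hGauss β hβ hβ2
end

section
/- Suppose β√(a(n)/n) ≤ √(2 ln 2) for every integer 1 ≤ n ≤ N, and for such n set γ₁(n) = β√(2 ln 2 · a(n)/n). Then for every ε > 0 and every integer m ≥ 1: P( there exists n with m ≤ n ≤ N such that max_{|v|=n} e^{β X_v} > e^{(γ₁(n)+ε)·n} ) ≤ (2/ε)·e^{−ε(m−1)}. -/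
/-!
Each edge variable `Y_u` is centred Gaussian, hence sub-Gaussian, so by independence `X_v` is
sub-Gaussian with variance proxy `a(|v|)`: the increments `a(k) - a(k-1)` telescope. A Chernoff
bound, with an exponent that works because `β² a(n) / n ≤ γ₁(n)`, gives
`P(β X_v > (γ₁(n) + ε) n) ≤ 2⁻ⁿ e^{-εn}` for each of the `2ⁿ` vertices of level `n`. A union bound
over vertices and levels leaves `∑_{n ≥ m} e^{-εn} ≤ e^{-ε(m-1)} / ε`.
-/

open MeasureTheory ProbabilityTheory Real

open scoped NNReal
open Finset

lemma ProbabilityTheory.HasSubgaussianMGF.of_map_eq_gaussianReal {Ω : Type*}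
    [MeasurableSpace Ω] {μ : Measure Ω} {X : Ω → ℝ} {v : ℝ≥0}
    (hX : μ.map X = gaussianReal 0 v) : HasSubgaussianMGF X v μ := by
  have hXm : AEMeasurable X μ := aemeasurable_of_map_neZero (by rw [hX]; infer_instance)
  rw [← HasSubgaussianMGF.id_map_iff hXm, hX]
  exact ⟨integrable_exp_mul_gaussianReal, fun t ↦ by simp [mgf_id_gaussianReal]⟩

lemma ProbabilityTheory.HasSubgaussianMGF.measureReal_ge_le_exp_add {Ω : Type*}
    [MeasurableSpace Ω] {μ : Measure Ω} [IsFiniteMeasure μ] {X : Ω → ℝ} {c : ℝ≥0}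
    (h : HasSubgaussianMGF X c μ) (x : ℝ) {t : ℝ} (ht : 0 ≤ t) :
    μ.real {ω | x ≤ X ω} ≤ exp (-t * x + c * t ^ 2 / 2) :=
  calc μ.real {ω | x ≤ X ω}
    _ ≤ exp (-t * x) * mgf X μ t := measure_ge_le_exp_mul_mgf x ht (h.integrable_exp_mul t)
    _ ≤ exp (-t * x + c * t ^ 2 / 2) := by
      rw [exp_add]
      gcongr
      exact h.mgf_le t

lemma Real.toNNReal_sum_range_sub {a : ℕ → ℝ} {n : ℕ} (ha : ∀ k < n, a k ≤ a (k + 1)) :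
    ∑ k ∈ range n, (a (k + 1) - a k).toNNReal = (a n - a 0).toNNReal := by
  rw [← sum_range_sub, Real.toNNReal_sum_of_nonneg]
  exact fun k hk ↦ sub_nonneg.2 (ha k (mem_range.1 hk))

lemma cremX_eq_sum_range {Ω : Type*} (Y : List Bool → Ω → ℝ) (v : List Bool) (ω : Ω) :
    cremX Y v ω = ∑ k ∈ range v.length, Y (v.take (k + 1)) ω := by
  rw [cremX, range_eq_Ico, sum_Ico_add' (fun k ↦ Y (v.take k) ω)]
  rfl

lemma hasSubgaussianMGF_cremX {Ω : Type*} [MeasurableSpace Ω] {P : Measure Ω} {N : ℕ}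
    {a : ℕ → ℝ} (ha0 : a 0 = 0) (haMono : ∀ ⦃m n : ℕ⦄, m ≤ n → n ≤ N → a m ≤ a n)
    {Y : List Bool → Ω → ℝ}
    (hIndep : iIndepFun
      (fun u : {u : List Bool // 1 ≤ u.length ∧ u.length ≤ N} => Y u.1) P)
    (hGauss : ∀ u : List Bool, 1 ≤ u.length → u.length ≤ N →
      P.map (Y u) = gaussianReal 0 (Real.toNNReal (a u.length - a (u.length - 1))))
    {v : List Bool} (hv : v.length ≤ N) :
    HasSubgaussianMGF (cremX Y v) (a v.length).toNNReal P := by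
  have hlen (k : Fin v.length) : (v.take (k + 1)).length = k + 1 := by
    simp only [List.length_take]; omega
  let prefix_ (k : Fin v.length) : {u : List Bool // 1 ≤ u.length ∧ u.length ≤ N} :=
    ⟨v.take (k + 1), by have := hlen k; omega⟩
  have hprefix : Function.Injective prefix_ := fun k l hkl ↦ by
    have := congrArg (fun u ↦ u.1.length) hkl
    simp only [prefix_, hlen] at this
    exact Fin.ext (by omega)
  have hsum := HasSubgaussianMGF.sum_of_iIndepFun (hIndep.precomp hprefix) (s := univ)
    (c := fun k : Fin v.length ↦ (a (k + 1) - a k).toNNReal) fun k _ ↦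
      .of_map_eq_gaussianReal (by rw [hGauss _ (prefix_ k).2.1 (prefix_ k).2.2, hlen]; rfl)
  rw [Fin.sum_univ_eq_sum_range (fun k ↦ (a (k + 1) - a k).toNNReal),
    Real.toNNReal_sum_range_sub fun k hk ↦ haMono k.le_succ (by omega), ha0, sub_zero] at hsum
  convert hsum using 1
  funext ω
  rw [cremX_eq_sum_range]
  exact (Fin.sum_univ_eq_sum_range (fun k ↦ Y (v.take (k + 1)) ω) _).symm

lemma exists_chernoff_exponent_le {L σ β γ ε n : ℝ} (hL : 0 ≤ L) (hσ : 0 ≤ σ) (hβ : 0 < β)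
    (hε : 0 < ε) (hn : 0 < n) (hβσ : β * √(σ / n) ≤ √(2 * L))
    (hγ : γ = β * √(2 * L * σ / n)) :
    ∃ t, 0 ≤ t ∧ -t * ((γ + ε) * n / β) + σ * t ^ 2 / 2 ≤ -(L + ε) * n := by
  have hγ0 : 0 ≤ γ := hγ ▸ by positivity
  have hγsq : γ ^ 2 * n = 2 * L * β ^ 2 * σ := by
    rw [hγ, mul_pow, sq_sqrt (by positivity)]
    field_simp
  have hσγ : β ^ 2 * σ ≤ γ * n := by
    have hsq : β ^ 2 * (σ / n) ≤ β * √(2 * L * σ / n) :=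
      calc β ^ 2 * (σ / n) = (β * √(σ / n)) * (β * √(σ / n)) := by
            rw [mul_mul_mul_comm, mul_self_sqrt (by positivity), sq]
        _ ≤ (β * √(σ / n)) * √(2 * L) := by gcongr
        _ = β * √(2 * L * σ / n) := by
            rw [mul_assoc, ← sqrt_mul (by positivity), mul_comm (σ / n), mul_div_assoc]
    rw [← hγ, mul_div_assoc'] at hsq
    exact (div_le_iff₀ hn).1 hsq
  -- at this `t` the linear term is `-2 (L + ε) n`; by `hσγ` the quadratic one is at most `(L + ε) n`
  refine ⟨2 * β * (L + ε) / (γ + ε), by positivity, ?_⟩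
  field_simp
  nlinarith [mul_le_mul_of_nonneg_left hσγ (by positivity : (0 : ℝ) ≤ 2 * ε * (L + ε)),
    sq_nonneg ε, mul_pos hn hε]

lemma ProbabilityTheory.HasSubgaussianMGF.measureReal_exp_mul_gt_le {Ω : Type*}
    [MeasurableSpace Ω] {μ : Measure Ω} [IsFiniteMeasure μ] {X : Ω → ℝ}
    {L σ β γ ε n : ℝ} (hX : HasSubgaussianMGF X σ.toNNReal μ) (hL : 0 ≤ L) (hσ : 0 ≤ σ)
    (hβ : 0 < β) (hε : 0 < ε) (hn : 0 < n) (hβσ : β * √(σ / n) ≤ √(2 * L))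
    (hγ : γ = β * √(2 * L * σ / n)) :
    μ.real {ω | exp ((γ + ε) * n) < exp (β * X ω)} ≤ exp (-(L + ε) * n) := by
  obtain ⟨t, ht, hexponent⟩ := exists_chernoff_exponent_le hL hσ hβ hε hn hβσ hγ
  have hsub : {ω | exp ((γ + ε) * n) < exp (β * X ω)} ⊆ {ω | (γ + ε) * n / β ≤ X ω} :=
    fun ω hω ↦ (div_le_iff₀' hβ).2 (exp_lt_exp.1 hω).le
  calc μ.real {ω | exp ((γ + ε) * n) < exp (β * X ω)}
    _ ≤ μ.real {ω | (γ + ε) * n / β ≤ X ω} := measureReal_mono hsub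
    _ ≤ exp (-t * ((γ + ε) * n / β) + σ * t ^ 2 / 2) := by
      simpa only [coe_toNNReal _ hσ] using hX.measureReal_ge_le_exp_add _ ht
    _ ≤ exp (-(L + ε) * n) := exp_le_exp.2 hexponent

lemma sum_Icc_exp_neg_mul_le {ε : ℝ} (hε : 0 < ε) (m N : ℕ) :
    ∑ n ∈ Icc m N, exp (-ε * n) ≤ exp (-ε * (m - 1)) / ε := by
  have hr : exp (-ε) < 1 := exp_lt_one_iff.2 (neg_lt_zero.2 hε)
  have hgap : ε * exp (-ε) ≤ 1 - exp (-ε) := by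
    have hinv : exp (-ε) * exp ε = 1 := by rw [← exp_add, neg_add_cancel, exp_zero]
    nlinarith [mul_le_mul_of_nonneg_left (add_one_le_exp ε) (exp_pos (-ε)).le]
  calc ∑ n ∈ Icc m N, exp (-ε * n)
    _ = ∑ n ∈ Ico m (N + 1), exp (-ε) ^ n := by
      rw [← Ico_add_one_right_eq_Icc]
      exact sum_congr rfl fun n _ ↦ by rw [← exp_nat_mul, mul_comm]
    _ ≤ exp (-ε) ^ m / (1 - exp (-ε)) := geom_sum_Ico_le_of_lt_one (exp_pos _).le hr
    _ ≤ exp (-ε) ^ m / (ε * exp (-ε)) := by gcongr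
    _ = exp (-ε * (m - 1)) / ε := by
      rw [← exp_nat_mul, div_mul_eq_div_div_swap, ← exp_sub]
      ring_nf

lemma sum_measureReal_cremX_gt_le {Ω : Type*} [MeasurableSpace Ω] {P : Measure Ω}
    [IsFiniteMeasure P] {N : ℕ} {a : ℕ → ℝ} (ha0 : a 0 = 0)
    (haMono : ∀ ⦃m n : ℕ⦄, m ≤ n → n ≤ N → a m ≤ a n) {Y : List Bool → Ω → ℝ}
    (hIndep : iIndepFun
      (fun u : {u : List Bool // 1 ≤ u.length ∧ u.length ≤ N} => Y u.1) P)
    (hGauss : ∀ u : List Bool, 1 ≤ u.length → u.length ≤ N →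
      P.map (Y u) = gaussianReal 0 (Real.toNNReal (a u.length - a (u.length - 1))))
    {β γ ε : ℝ} {n : ℕ} (hβ : 0 < β) (hε : 0 < ε) (hn : 1 ≤ n) (hnN : n ≤ N)
    (hβ2 : β * √(a n / n) ≤ √(2 * log 2)) (hγ : γ = β * √(2 * log 2 * a n / n)) :
    ∑ f : Fin n → Bool, P.real {ω | exp ((γ + ε) * n) < exp (β * cremX Y (List.ofFn f) ω)}
      ≤ exp (-ε * n) := by
  have hvertex (f : Fin n → Bool) :
      P.real {ω | exp ((γ + ε) * n) < exp (β * cremX Y (List.ofFn f) ω)}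
        ≤ exp (-(log 2 + ε) * n) := by
    have hX := hasSubgaussianMGF_cremX ha0 haMono hIndep hGauss (v := List.ofFn f)
      (by rwa [List.length_ofFn])
    rw [List.length_ofFn] at hX
    exact hX.measureReal_exp_mul_gt_le (log_nonneg one_le_two)
      (ha0 ▸ haMono n.zero_le hnN) hβ hε (by exact_mod_cast hn) hβ2 hγ
  calc ∑ f : Fin n → Bool, P.real {ω | exp ((γ + ε) * n) < exp (β * cremX Y (List.ofFn f) ω)}
    _ ≤ ∑ _f : Fin n → Bool, exp (-(log 2 + ε) * n) := sum_le_sum fun f _ ↦ hvertex f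
    _ = exp (n * log 2) * exp (-(log 2 + ε) * n) := by
      rw [sum_const, card_univ, Fintype.card_fun, Fintype.card_bool, nsmul_eq_mul,
        exp_nat_mul, exp_log two_pos]
      norm_num
    _ = exp (-ε * n) := by rw [← exp_add]; ring_nf

theorem crem_max_large_union_bound_general
    (N : ℕ) (a : ℕ → ℝ) (ha0 : a 0 = 0)
    (haMono : ∀ ⦃m n : ℕ⦄, m ≤ n → n ≤ N → a m ≤ a n)
    {Ω : Type*} [MeasurableSpace Ω] (P : Measure Ω) [IsProbabilityMeasure P]
    (Y : List Bool → Ω → ℝ)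
    (hIndep : iIndepFun
      (fun u : {u : List Bool // 1 ≤ u.length ∧ u.length ≤ N} => Y u.1) P)
    (hGauss : ∀ u : List Bool, 1 ≤ u.length → u.length ≤ N →
      P.map (Y u) = gaussianReal 0 (Real.toNNReal (a u.length - a (u.length - 1))))
    (β : ℝ) (hβ : 0 < β)
    (hβ2 : ∀ n : ℕ, 1 ≤ n → n ≤ N →
      β * Real.sqrt (a n / n) ≤ Real.sqrt (2 * Real.log 2))
    (γ₁ : ℕ → ℝ) (hγ₁ : ∀ n : ℕ, γ₁ n = β * Real.sqrt (2 * Real.log 2 * a n / n))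
    (ε : ℝ) (hε : 0 < ε) (m : ℕ) (hm : 1 ≤ m) :
    P {ω | ∃ n : ℕ, m ≤ n ∧ n ≤ N ∧
        (Finset.univ : Finset (Fin n → Bool)).sup' Finset.univ_nonempty
          (fun f => Real.exp (β * cremX Y (List.ofFn f) ω)) >
          Real.exp ((γ₁ n + ε) * n)}
      ≤ ENNReal.ofReal ((2 / ε) * Real.exp (-ε * ((m : ℝ) - 1))) := by
  set E := fun (n : ℕ) (f : Fin n → Bool) ↦
    {ω | exp ((γ₁ n + ε) * n) < exp (β * cremX Y (List.ofFn f) ω)}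
  have hsub : {ω | ∃ n : ℕ, m ≤ n ∧ n ≤ N ∧
      (univ : Finset (Fin n → Bool)).sup' univ_nonempty
        (fun f => exp (β * cremX Y (List.ofFn f) ω)) > exp ((γ₁ n + ε) * n)}
      ⊆ ⋃ n ∈ Icc m N, ⋃ f ∈ (univ : Finset (Fin n → Bool)), E n f := by
    rintro ω ⟨n, hmn, hnN, hmax⟩
    obtain ⟨f, -, hf⟩ := (lt_sup'_iff _).1 hmax
    simp only [Set.mem_iUnion]
    exact ⟨n, mem_Icc.2 ⟨hmn, hnN⟩, f, mem_univ f, hf⟩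
  rw [ENNReal.le_ofReal_iff_toReal_le (measure_ne_top _ _) (by positivity), ← measureReal_def]
  calc P.real _
    _ ≤ ∑ n ∈ Icc m N, ∑ f : Fin n → Bool, P.real (E n f) :=
      (measureReal_mono hsub (measure_ne_top _ _)).trans <|
        (measureReal_biUnion_finset_le _ _).trans <|
          sum_le_sum fun n _ ↦ measureReal_biUnion_finset_le _ _
    _ ≤ ∑ n ∈ Icc m N, exp (-ε * n) := sum_le_sum fun n hn ↦
      have ⟨hmn, hnN⟩ := mem_Icc.1 hn
      sum_measureReal_cremX_gt_le ha0 haMono hIndep hGauss hβ hε (hm.trans hmn) hnN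
        (hβ2 n (hm.trans hmn) hnN) (hγ₁ n)
    _ ≤ exp (-ε * (m - 1)) / ε := sum_Icc_exp_neg_mul_le hε m N
    _ ≤ 2 / ε * exp (-ε * (m - 1)) := by
      rw [div_mul_eq_mul_div]
      gcongr
      linarith [exp_pos (-ε * (m - 1))]

/-- If `β √(a(n)/n) ≤ √(2 ln 2)` for all `1 ≤ n ≤ N`, then for every
`ε > 0` and integer `m ≥ 1`, the probability that some level `n ∈ [m, N]` has a vertex `v`
with `e^{β X_v} > e^{(γ₁(n)+ε)n}`, where `γ₁(n) = β √(2 ln 2 · a(n)/n)`, is at most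
`(2/ε) e^{−ε(m−1)}`. -/
theorem crem_max_large_union_bound
    (N : ℕ) (hN : 1 ≤ N) (a : ℕ → ℝ) (ha0 : a 0 = 0)
    (haMono : ∀ ⦃m n : ℕ⦄, m ≤ n → n ≤ N → a m ≤ a n)
    {Ω : Type*} [MeasurableSpace Ω] (P : Measure Ω) [IsProbabilityMeasure P]
    (Y : List Bool → Ω → ℝ) (hmeas : ∀ u, Measurable (Y u))
    (hIndep : iIndepFun
      (fun u : {u : List Bool // 1 ≤ u.length ∧ u.length ≤ N} => Y u.1) P)
    (hGauss : ∀ u : List Bool, 1 ≤ u.length → u.length ≤ N →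
      P.map (Y u) = gaussianReal 0 (Real.toNNReal (a u.length - a (u.length - 1))))
    (β : ℝ) (hβ : 0 < β)
    (hβ2 : ∀ n : ℕ, 1 ≤ n → n ≤ N →
      β * Real.sqrt (a n / n) ≤ Real.sqrt (2 * Real.log 2))
    (γ₁ : ℕ → ℝ) (hγ₁ : ∀ n : ℕ, γ₁ n = β * Real.sqrt (2 * Real.log 2 * a n / n))
    (ε : ℝ) (hε : 0 < ε) (m : ℕ) (hm : 1 ≤ m) :
    P {ω | ∃ n : ℕ, m ≤ n ∧ n ≤ N ∧
        (Finset.univ : Finset (Fin n → Bool)).sup' Finset.univ_nonempty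
          (fun f => Real.exp (β * cremX Y (List.ofFn f) ω)) >
          Real.exp ((γ₁ n + ε) * n)}
      ≤ ENNReal.ofReal ((2 / ε) * Real.exp (-ε * ((m : ℝ) - 1))) :=
  crem_max_large_union_bound_general N a ha0 haMono P Y hIndep hGauss β hβ hβ2 γ₁ hγ₁ ε hε m hm
end

section
/- Let Δ₁,…,Δₙ ⊆ ℝ be Borel sets with P(ξ_i ∈ Δ_i) > 0 for all i, where ξ_i ~ N(0, a_i s_i), and let η > 0. Then P( #{ v = v₁⋯vₙ (with v_i ∈ {0,1}^{s_i}) : Y_{v₁⋯v_i} ∈ Δ_i for all 1 ≤ i ≤ n } ≤ (1−η)·2^N·∏_{i=1}^n P(ξ_i ∈ Δ_i) ) ≤ (1/η²)·Σ_{j=1}^n 1/∏_{i=1}^j ( 2^{s_i}·P(ξ_i ∈ Δ_i) ). -/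
/-!
Second moment method. Let `K` count the leaves `v` whose path satisfies `Y_{v₁⋯v_i} ∈ Δ_i` for
all `i`, and let `Q = ∏ q_i`, so that `E K = 2^N Q`. Two leaves whose paths agree exactly up to
generation `j` share their first `j` nodes, so by independence both paths succeed with
probability `Q² / ∏_{i ≤ j} q_i`; and at most `2^{2N} / ∏_{i ≤ j} 2^{s_i}` pairs of leaves agree
up to generation `j`. Hence `Var K ≤ (E K)² ∑_j 1 / ∏_{i ≤ j} (2^{s_i} q_i)`, and Chebyshev's
inequality at distance `η E K` from the mean concludes.
-/

open MeasureTheory ProbabilityTheory Real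

/-- Truncation of a GREM leaf configuration after block `i`: coordinates in blocks `> i`
are replaced by a fixed default value, so that `gremTrunc s i v` records exactly the prefix
`v₁⋯v_i` of `v`. -/
def gremTrunc {n : ℕ} (s : Fin n → ℕ) (i : Fin n) (v : (j : Fin n) → Fin (s j) → Bool) :
    (j : Fin n) → Fin (s j) → Bool :=
  fun j => if j ≤ i then v j else fun _ => false

open Finset

section SecondMoment

variable {Ω : Type*} [MeasurableSpace Ω] {P : Measure Ω} [IsProbabilityMeasure P]

lemma measure_le_one_sub_mul_integral_le {X : Ω → ℝ} (hX : MemLp X 2 P) {η : ℝ} (hη : 0 < η)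
    (hmean : 0 < P[X]) :
    P {ω | X ω ≤ (1 - η) * P[X]} ≤ ENNReal.ofReal (variance X P / (η * P[X]) ^ 2) := by
  refine (measure_mono fun ω hω => ?_).trans (meas_ge_le_variance_div_sq hX (mul_pos hη hmean))
  simp only [Set.mem_ofPred_eq] at hω ⊢
  rw [abs_sub_comm]
  exact (by linarith : η * P[X] ≤ P[X] - X ω).trans (le_abs_self _)

lemma memLp_indicator_one {A : Set Ω} (hA : MeasurableSet A) :
    MemLp (A.indicator (1 : Ω → ℝ)) 2 P :=
  memLp_indicator_const 2 hA 1 (Or.inr (measure_ne_top P A))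

lemma covariance_indicator_one {A B : Set Ω} (hA : MeasurableSet A) (hB : MeasurableSet B) :
    cov[A.indicator (1 : Ω → ℝ), B.indicator 1; P] = P.real (A ∩ B) - P.real A * P.real B := by
  rw [covariance_eq_sub (memLp_indicator_one hA) (memLp_indicator_one hB),
    ← Set.inter_indicator_one, integral_indicator_one (hA.inter hB), integral_indicator_one hA,
    integral_indicator_one hB]

variable {ι : Type*} [Fintype ι] {A : ι → Set Ω}

lemma memLp_sum_indicator_one (hA : ∀ i, MeasurableSet (A i)) :
    MemLp (fun ω => ∑ i, (A i).indicator (1 : Ω → ℝ) ω) 2 P :=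
  memLp_finsetSum _ fun i _ => memLp_indicator_one (hA i)

lemma integral_sum_indicator_one (hA : ∀ i, MeasurableSet (A i)) :
    P[fun ω => ∑ i, (A i).indicator (1 : Ω → ℝ) ω] = ∑ i, P.real (A i) := by
  rw [integral_finsetSum _ fun i _ => (memLp_indicator_one (hA i)).integrable one_le_two]
  simp_rw [integral_indicator_one (hA _)]

lemma variance_sum_indicator_one (hA : ∀ i, MeasurableSet (A i)) :
    variance (fun ω => ∑ i, (A i).indicator (1 : Ω → ℝ) ω) P
      = ∑ i, ∑ j, (P.real (A i ∩ A j) - P.real (A i) * P.real (A j)) := by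
  rw [variance_fun_sum fun i => memLp_indicator_one (hA i)]
  simp_rw [covariance_indicator_one (hA _) (hA _)]

end SecondMoment

lemma div_prod_sub_le_sum_div_prod_of_isLowerSet {ι : Type*} [Fintype ι] [LinearOrder ι]
    {m : Finset ι} (hm : IsLowerSet (m : Set ι)) {q : ι → ℝ} (hq : ∀ i, 0 < q i) {C : ℝ}
    (hC : 0 ≤ C) :
    C / ∏ i ∈ m, q i - C ≤ ∑ j ∈ m, C / ∏ i ∈ univ.filter (· ≤ j), q i := by
  have hterm : ∀ j, 0 ≤ C / ∏ i ∈ univ.filter (· ≤ j), q i :=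
    fun j => div_nonneg hC (prod_pos fun i _ => hq i).le
  rcases m.eq_empty_or_nonempty with rfl | hne
  · simp
  -- a nonempty lower set of a linear order is the set of elements below its maximum
  have hmax : univ.filter (· ≤ m.max' hne) = m := by
    ext i
    simp only [mem_filter, mem_univ, true_and]
    exact ⟨fun hi => hm hi (m.max'_mem hne), m.le_max' i⟩
  calc C / ∏ i ∈ m, q i - C ≤ C / ∏ i ∈ univ.filter (· ≤ m.max' hne), q i := by
        rw [hmax]; linarith
    _ ≤ ∑ j ∈ m, C / ∏ i ∈ univ.filter (· ≤ j), q i :=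
        single_le_sum (fun j _ => hterm j) (m.max'_mem hne)

section Tree

variable {n : ℕ} {s : Fin n → ℕ}

abbrev GremLeaf (s : Fin n → ℕ) := (j : Fin n) → Fin (s j) → Bool

lemma card_gremLeaf : Fintype.card (GremLeaf s) = 2 ^ ∑ i, s i := by
  simp [Fintype.card_pi, prod_pow_eq_pow_sum]

lemma gremTrunc_idem (i : Fin n) (v : GremLeaf s) :
    gremTrunc s i (gremTrunc s i v) = gremTrunc s i v := by
  funext j
  by_cases h : j ≤ i <;> simp [gremTrunc, h]

lemma apply_eq_of_gremTrunc_eq {i j : Fin n} {v w : GremLeaf s}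
    (h : gremTrunc s j v = gremTrunc s j w) (hij : i ≤ j) : v i = w i := by
  simpa [gremTrunc, hij] using congrFun h i

lemma gremTrunc_eq_of_le {i j : Fin n} (hij : i ≤ j) {v w : GremLeaf s}
    (h : gremTrunc s j v = gremTrunc s j w) : gremTrunc s i v = gremTrunc s i w := by
  funext k
  by_cases hk : k ≤ i
  · simp [gremTrunc, hk, apply_eq_of_gremTrunc_eq h (hk.trans hij)]
  · simp [gremTrunc, hk]

lemma isLowerSet_gremTrunc_eq (v w : GremLeaf s) :
    IsLowerSet ((univ.filter fun i => gremTrunc s i v = gremTrunc s i w : Finset (Fin n)) :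
      Set (Fin n)) := by
  intro j i hij hj
  simp only [coe_filter, mem_univ, true_and, Set.mem_ofPred_eq] at hj ⊢
  exact gremTrunc_eq_of_le hij hj

lemma card_gremTrunc_eq_mul_prod_le (j : Fin n) (v : GremLeaf s) :
    #{w | gremTrunc s j v = gremTrunc s j w} * ∏ i ∈ univ.filter (· ≤ j), 2 ^ s i
      ≤ 2 ^ ∑ i, s i := by
  -- a leaf sharing its first `j` blocks with `v` is determined by its remaining blocks
  have hfiber : #{w | gremTrunc s j v = gremTrunc s j w}
      ≤ ∏ i ∈ univ.filter (fun i => ¬ i ≤ j), 2 ^ s i := by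
    calc #{w | gremTrunc s j v = gremTrunc s j w}
        ≤ Fintype.card ((i : {i : Fin n // ¬ i ≤ j}) → Fin (s i) → Bool) := by
          rw [← card_univ]
          refine card_le_card_of_injOn (fun w i => w i) (fun _ _ => mem_univ _) ?_
          intro w hw w' hw' h
          simp only [coe_filter, mem_univ, true_and, Set.mem_ofPred_eq] at hw hw'
          funext k
          by_cases hk : k ≤ j
          · rw [← apply_eq_of_gremTrunc_eq hw hk, apply_eq_of_gremTrunc_eq hw' hk]
          · exact congrFun h ⟨k, hk⟩
      _ = ∏ i ∈ univ.filter (fun i => ¬ i ≤ j), 2 ^ s i := by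
          rw [Fintype.card_pi, ← prod_subtype_eq_prod_filter]
          simp
  calc _ ≤ (∏ i ∈ univ.filter (fun i => ¬ i ≤ j), 2 ^ s i)
        * ∏ i ∈ univ.filter (· ≤ j), 2 ^ s i :=
        Nat.mul_le_mul_right _ hfiber
    _ = 2 ^ ∑ i, s i := by
        rw [mul_comm, prod_filter_mul_prod_filter_not, prod_pow_eq_pow_sum]

-- Nodes of generation `i` are encoded, as in the index type of the independent family, by the
-- leaves fixed by `gremTrunc s i`.
def gremNode (s : Fin n → ℕ) (i : Fin n) (v : GremLeaf s) :
    Σ i : Fin n, {u : GremLeaf s // gremTrunc s i u = u} :=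
  ⟨i, gremTrunc s i v, gremTrunc_idem i v⟩

lemma gremNode_inj_iff {i : Fin n} {v w : GremLeaf s} :
    gremNode s i v = gremNode s i w ↔ gremTrunc s i v = gremTrunc s i w := by
  simp [gremNode]

end Tree

section Probability

variable {n : ℕ} {s : Fin n → ℕ} {Ω : Type*} [MeasurableSpace Ω] {P : Measure Ω}
  {Y : (i : Fin n) → GremLeaf s → Ω → ℝ} {Δ : Fin n → Set ℝ} {q : Fin n → ℝ}

def gremPathEvent (Y : (i : Fin n) → GremLeaf s → Ω → ℝ) (Δ : Fin n → Set ℝ) (v : GremLeaf s) :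
    Set Ω :=
  ⋂ i, Y i v ⁻¹' Δ i

lemma measurableSet_gremPathEvent (hmeas : ∀ i v, Measurable (Y i v))
    (hΔ : ∀ i, MeasurableSet (Δ i)) (v : GremLeaf s) : MeasurableSet (gremPathEvent Y Δ v) :=
  .iInter fun i => hmeas i v (hΔ i)

lemma prod_mul_measureReal_gremPathEvent_inter
    (hPrefix : ∀ i v, Y i (gremTrunc s i v) = Y i v)
    (hIndep : iIndepFun
      (fun t : Σ i : Fin n, {v : GremLeaf s // gremTrunc s i v = v} => Y t.1 t.2.1) P)
    (hΔ : ∀ i, MeasurableSet (Δ i)) (hE : ∀ i v, P.real (Y i v ⁻¹' Δ i) = q i)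
    (v w : GremLeaf s) :
    (∏ i ∈ univ.filter (fun i => gremTrunc s i v = gremTrunc s i w), q i)
        * P.real (gremPathEvent Y Δ v ∩ gremPathEvent Y Δ w) = (∏ i, q i) ^ 2 := by
  set E : (Σ i : Fin n, {u : GremLeaf s // gremTrunc s i u = u}) → Set Ω :=
    fun t => Y t.1 t.2.1 ⁻¹' Δ t.1
  have hEnode : ∀ i u, E (gremNode s i u) = Y i u ⁻¹' Δ i := by
    simp [E, gremNode, hPrefix]
  have hdisj : ((univ : Finset (Fin n)) : Set (Fin n)).PairwiseDisjoint
      fun i => ({gremNode s i v, gremNode s i w} : Finset _) := by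
    intro i _ j _ hij
    refine disjoint_left.2 fun t hi hj => hij ?_
    simp only [mem_insert, mem_singleton] at hi hj
    rcases hi with rfl | rfl <;> rcases hj with h | h <;> exact congrArg Sigma.fst h
  have hinter : gremPathEvent Y Δ v ∩ gremPathEvent Y Δ w
      = ⋂ t ∈ univ.biUnion fun i => {gremNode s i v, gremNode s i w}, E t := by
    simp only [gremPathEvent, set_biInter_biUnion, set_biInter_insert, set_biInter_singleton,
      mem_univ, Set.iInter_true, hEnode, Set.iInter_inter_distrib]
  -- along each generation the two paths visit one or two nodes
  have hnode : ∀ i, (if gremTrunc s i v = gremTrunc s i w then q i else 1)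
      * ∏ t ∈ {gremNode s i v, gremNode s i w}, P.real (E t) = q i ^ 2 := by
    intro i
    split_ifs with h
    · rw [← gremNode_inj_iff.2 h, pair_eq_singleton, prod_singleton, hEnode, hE, sq]
    · rw [prod_pair (mt gremNode_inj_iff.1 h), hEnode, hEnode, hE, hE, one_mul, sq]
  have hprod : ∀ S, P.real (⋂ t ∈ S, E t) = ∏ t ∈ S, P.real (E t) := fun S => by
    rw [measureReal_def, hIndep.meas_biInter fun t _ => ⟨Δ t.1, hΔ t.1, rfl⟩,
      ENNReal.toReal_prod]
    rfl
  rw [hinter, hprod, prod_biUnion hdisj, prod_filter, ← prod_mul_distrib, ← prod_pow]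
  exact prod_congr rfl fun i _ => hnode i

lemma measureReal_gremPathEvent (hPrefix : ∀ i v, Y i (gremTrunc s i v) = Y i v)
    (hIndep : iIndepFun
      (fun t : Σ i : Fin n, {v : GremLeaf s // gremTrunc s i v = v} => Y t.1 t.2.1) P)
    (hΔ : ∀ i, MeasurableSet (Δ i)) (hE : ∀ i v, P.real (Y i v ⁻¹' Δ i) = q i)
    (hq : ∀ i, 0 < q i) (v : GremLeaf s) :
    P.real (gremPathEvent Y Δ v) = ∏ i, q i := by
  have h := prod_mul_measureReal_gremPathEvent_inter hPrefix hIndep hΔ hE v v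
  rw [filter_true_of_mem fun i _ => rfl, Set.inter_self, sq] at h
  exact mul_left_cancel₀ (prod_pos fun i _ => hq i).ne' h

lemma variance_sum_indicator_gremPathEvent_le [IsProbabilityMeasure P]
    (hmeas : ∀ i v, Measurable (Y i v))
    (hPrefix : ∀ i v, Y i (gremTrunc s i v) = Y i v)
    (hIndep : iIndepFun
      (fun t : Σ i : Fin n, {v : GremLeaf s // gremTrunc s i v = v} => Y t.1 t.2.1) P)
    (hΔ : ∀ i, MeasurableSet (Δ i)) (hE : ∀ i v, P.real (Y i v ⁻¹' Δ i) = q i)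
    (hq : ∀ i, 0 < q i) :
    variance (fun ω => ∑ v : GremLeaf s, (gremPathEvent Y Δ v).indicator (1 : Ω → ℝ) ω) P
      ≤ (2 ^ (∑ i, s i) * ∏ i, q i) ^ 2 * ∑ j, 1 / ∏ i ∈ univ.filter (· ≤ j), (2 ^ s i * q i) := by
  set Q := ∏ i, q i
  have hpair := prod_mul_measureReal_gremPathEvent_inter hPrefix hIndep hΔ hE
  have hterm : ∀ v w, P.real (gremPathEvent Y Δ v ∩ gremPathEvent Y Δ w) - Q * Q
      ≤ ∑ j, if gremTrunc s j v = gremTrunc s j w then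
        Q ^ 2 / ∏ i ∈ univ.filter (· ≤ j), q i else 0 := fun v w => by
    have hvw : P.real (gremPathEvent Y Δ v ∩ gremPathEvent Y Δ w)
        = Q ^ 2 / ∏ i ∈ univ.filter (fun i => gremTrunc s i v = gremTrunc s i w), q i :=
      eq_div_of_mul_eq (prod_pos fun i _ => hq i).ne' (by rw [mul_comm]; exact hpair v w)
    rw [← sum_filter, hvw, ← sq]
    exact div_prod_sub_le_sum_div_prod_of_isLowerSet (isLowerSet_gremTrunc_eq v w) hq
      (sq_nonneg Q)
  have hcount : ∀ j v, (#{w | gremTrunc s j v = gremTrunc s j w} : ℝ)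
      ≤ (2 : ℝ) ^ (∑ i, s i) / ∏ i ∈ univ.filter (· ≤ j), (2 : ℝ) ^ s i := fun j v => by
    rw [le_div_iff₀ (prod_pos fun i _ => by positivity)]
    exact_mod_cast card_gremTrunc_eq_mul_prod_le j v
  calc _ = ∑ v : GremLeaf s, ∑ w : GremLeaf s,
        (P.real (gremPathEvent Y Δ v ∩ gremPathEvent Y Δ w) - Q * Q) := by
        rw [variance_sum_indicator_one (measurableSet_gremPathEvent hmeas hΔ)]
        simp only [measureReal_gremPathEvent hPrefix hIndep hΔ hE hq]
        rfl
    _ ≤ ∑ v : GremLeaf s, ∑ w : GremLeaf s, ∑ j, if gremTrunc s j v = gremTrunc s j w then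
        Q ^ 2 / ∏ i ∈ univ.filter (· ≤ j), q i else 0 :=
        sum_le_sum fun v _ => sum_le_sum fun w _ => hterm v w
    _ = ∑ v : GremLeaf s, ∑ j, #{w | gremTrunc s j v = gremTrunc s j w}
        * (Q ^ 2 / ∏ i ∈ univ.filter (· ≤ j), q i) := by
        refine sum_congr rfl fun v _ => ?_
        rw [sum_comm]
        simp only [← sum_filter, sum_const, nsmul_eq_mul]
    _ = ∑ j, ∑ v : GremLeaf s, #{w | gremTrunc s j v = gremTrunc s j w}
        * (Q ^ 2 / ∏ i ∈ univ.filter (· ≤ j), q i) := sum_comm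
    _ ≤ ∑ j, ∑ v : GremLeaf s,
        ((2 : ℝ) ^ (∑ i, s i) / ∏ i ∈ univ.filter (· ≤ j), (2 : ℝ) ^ s i)
        * (Q ^ 2 / ∏ i ∈ univ.filter (· ≤ j), q i) := by
        gcongr with j _ v _
        · exact div_nonneg (sq_nonneg Q) (prod_pos fun i _ => hq i).le
        · exact hcount j v
    _ = _ := by
        simp only [sum_const, card_univ, card_gremLeaf, nsmul_eq_mul, mul_sum, prod_mul_distrib]
        refine sum_congr rfl fun j _ => ?_
        push_cast
        field_simp

end Probability

theorem grem_counting_bound_general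
    (n : ℕ) (s : Fin n → ℕ)
    (a : Fin n → ℝ)
    {Ω : Type*} [MeasurableSpace Ω] (P : Measure Ω) [IsProbabilityMeasure P]
    (Y : (i : Fin n) → ((j : Fin n) → Fin (s j) → Bool) → Ω → ℝ)
    (hmeas : ∀ i v, Measurable (Y i v))
    (hPrefix : ∀ i v, Y i (gremTrunc s i v) = Y i v)
    (hIndep : iIndepFun
      (fun t : Σ i : Fin n, {v : (j : Fin n) → Fin (s j) → Bool // gremTrunc s i v = v} =>
        Y t.1 t.2.1) P)
    (hGauss : ∀ i v, P.map (Y i v) = gaussianReal 0 (Real.toNNReal (a i * s i)))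
    (Δ : Fin n → Set ℝ) (hΔ : ∀ i, MeasurableSet (Δ i))
    (q : Fin n → ℝ)
    (hq : ∀ i, q i = ((gaussianReal 0 (Real.toNNReal (a i * s i))) (Δ i)).toReal)
    (hqpos : ∀ i, 0 < q i)
    (η : ℝ) (hη : 0 < η) :
    P {ω | (Nat.card {v : (j : Fin n) → Fin (s j) → Bool // ∀ i, Y i v ω ∈ Δ i} : ℝ)
        ≤ (1 - η) * 2 ^ (∑ i, s i) * ∏ i, q i}
      ≤ ENNReal.ofReal ((1 / η ^ 2) *
          ∑ j : Fin n, 1 / ∏ i ∈ Finset.univ.filter (· ≤ j), (2 ^ (s i) * q i)) := by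
  have hE : ∀ i v, P.real (Y i v ⁻¹' Δ i) = q i := fun i v => by
    rw [hq, measureReal_def, ← hGauss i v, Measure.map_apply (hmeas i v) (hΔ i)]
  have hA := measurableSet_gremPathEvent hmeas hΔ
  set K := fun ω => ∑ v : GremLeaf s, (gremPathEvent Y Δ v).indicator (1 : Ω → ℝ) ω
  have hcard : ∀ ω, (Nat.card {v : GremLeaf s // ∀ i, Y i v ω ∈ Δ i} : ℝ) = K ω := fun ω => by
    classical
    rw [Nat.card_eq_fintype_card, Fintype.card_subtype, card_filter]
    push_cast
    simp [K, gremPathEvent, Set.indicator_apply]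
  have hmean : P[K] = 2 ^ (∑ i, s i) * ∏ i, q i := by
    simp [K, integral_sum_indicator_one hA, measureReal_gremPathEvent hPrefix hIndep hΔ hE hqpos,
      prod_pow_eq_pow_sum]
  have hmean_pos : 0 < P[K] := hmean ▸ mul_pos (by positivity) (prod_pos fun i _ => hqpos i)
  calc P {ω | (Nat.card {v : GremLeaf s // ∀ i, Y i v ω ∈ Δ i} : ℝ)
        ≤ (1 - η) * 2 ^ (∑ i, s i) * ∏ i, q i}
      = P {ω | K ω ≤ (1 - η) * P[K]} := by simp_rw [hcard, hmean, mul_assoc]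
    _ ≤ ENNReal.ofReal (variance K P / (η * P[K]) ^ 2) :=
        measure_le_one_sub_mul_integral_le (memLp_sum_indicator_one hA) hη hmean_pos
    _ ≤ _ := by
        refine ENNReal.ofReal_le_ofReal ?_
        rw [div_le_iff₀ (by positivity)]
        calc variance K P ≤ P[K] ^ 2 * ∑ j, 1 / ∏ i ∈ univ.filter (· ≤ j), (2 ^ s i * q i) :=
              hmean ▸ variance_sum_indicator_gremPathEvent_le hmeas hPrefix hIndep hΔ hE hqpos
          _ = _ := by field_simp

/-- Second-moment counting bound for the GREM (quantitative version of
Capocaccia–Cassandro–Picco): the number of leaves all of whose block variables fall in the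
prescribed sets `Δ_i` is, with large probability, at least `(1−η) 2^N ∏ P(ξ_i ∈ Δ_i)`. -/
theorem grem_counting_bound
    (n : ℕ) (hn : 1 ≤ n) (s : Fin n → ℕ) (hs : ∀ i, 1 ≤ s i)
    (a : Fin n → ℝ) (ha : ∀ i, 0 ≤ a i)
    {Ω : Type*} [MeasurableSpace Ω] (P : Measure Ω) [IsProbabilityMeasure P]
    (Y : (i : Fin n) → ((j : Fin n) → Fin (s j) → Bool) → Ω → ℝ)
    (hmeas : ∀ i v, Measurable (Y i v))
    (hPrefix : ∀ i v, Y i (gremTrunc s i v) = Y i v)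
    (hIndep : iIndepFun
      (fun t : Σ i : Fin n, {v : (j : Fin n) → Fin (s j) → Bool // gremTrunc s i v = v} =>
        Y t.1 t.2.1) P)
    (hGauss : ∀ i v, P.map (Y i v) = gaussianReal 0 (Real.toNNReal (a i * s i)))
    (Δ : Fin n → Set ℝ) (hΔ : ∀ i, MeasurableSet (Δ i))
    (q : Fin n → ℝ)
    (hq : ∀ i, q i = ((gaussianReal 0 (Real.toNNReal (a i * s i))) (Δ i)).toReal)
    (hqpos : ∀ i, 0 < q i)
    (η : ℝ) (hη : 0 < η) :
    P {ω | (Nat.card {v : (j : Fin n) → Fin (s j) → Bool // ∀ i, Y i v ω ∈ Δ i} : ℝ)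
        ≤ (1 - η) * 2 ^ (∑ i, s i) * ∏ i, q i}
      ≤ ENNReal.ofReal ((1 / η ^ 2) *
          ∑ j : Fin n, 1 / ∏ i ∈ Finset.univ.filter (· ≤ j), (2 ^ (s i) * q i)) :=
  grem_counting_bound_general n s a P Y hmeas hPrefix hIndep hGauss Δ hΔ q hq hqpos η hη
end

section
/- Let π be a probability distribution on T_N with π(v) > 0 for every vertex v, and consider the Metropolis chain on T_N with stationary distribution π. Then for every s ∈ [0, 1/2), the s-conductance Φ_s of this chain satisfies Φ_s ≥ inf{ (1/3)·π(S) / (π(A) − s) : S ⊆ T_N, A = Desc⁰(S), π(A) > s }. -/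
open MeasureTheory

noncomputable instance treeVertexFintype (N : ℕ) :
    Fintype {l : List Bool // l.length ≤ N} :=
  @Fintype.ofFinite _ (List.finite_length_le Bool N)

/-- Off-diagonal transition probabilities of the Metropolis chain on the binary tree of
depth `N` with target distribution `π`: from `v`, each of the parent and the two children
is proposed with probability `1/3` and an existing proposal `w` is accepted with
probability `min (π w / π v) 1`. -/
noncomputable def metroProp {N : ℕ} (π : {l : List Bool // l.length ≤ N} → ℝ)
    (v w : {l : List Bool // l.length ≤ N}) : ℝ :=
  if w.1 ≠ v.1 ∧ (w.1 = v.1.dropLast ∨ w.1 = v.1 ++ [false] ∨ w.1 = v.1 ++ [true]) then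
    (1 / 3) * min (π w / π v) 1
  else 0

/-- The full transition matrix of the Metropolis chain on the binary tree of depth `N`:
off-diagonal entries are given by `metroProp`, and the diagonal holds the remaining mass
(rejections and nonexistent moves). -/
noncomputable def metroK {N : ℕ} (π : {l : List Bool // l.length ≤ N} → ℝ)
    (v w : {l : List Bool // l.length ≤ N}) : ℝ :=
  if w = v then 1 - ∑ u ∈ Finset.univ.erase v, metroProp π v u
  else metroProp π v w

/-!
Let `A` be a cut and let `B` be whichever of `A`, `Aᶜ` avoids the root; by reversibility the
flow out of `B` equals the flow out of `A`. Every vertex of `B` descends from a vertex `v ∈ B`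
whose parent lies outside `B`, and the edge from `v` to its parent alone carries flow
`(1/3) · min (π v) (π (parent v))`. Collecting the lighter endpoint of each such edge gives a set
`S` with `B ⊆ Desc⁰(S)` and `(1/3) · π(S)` at most the flow, while the denominator
`min (π(A) − s) (π(Aᶜ) − s)` is at most `π(B) − s ≤ π(Desc⁰(S)) − s`.
-/

open Finset

section ErgodicFlow

variable {α R : Type*} [CommSemiring R] (π : α → R) (K : α → α → R)

def ergodicFlow (A B : Finset α) : R := ∑ u ∈ A, π u * ∑ w ∈ B, K u w

variable {π K}

theorem ergodicFlow_comm (hK : ∀ u w, π u * K u w = π w * K w u) (A B : Finset α) :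
    ergodicFlow π K A B = ergodicFlow π K B A := by
  simp only [ergodicFlow, mul_sum]
  rw [sum_comm]
  exact sum_congr rfl fun w _ ↦ sum_congr rfl fun u _ ↦ hK u w

end ErgodicFlow

abbrev TreeVertex (N : ℕ) := {l : List Bool // l.length ≤ N}

namespace TreeVertex

variable {N : ℕ}

def root : TreeVertex N := ⟨[], Nat.zero_le N⟩

def parent (v : TreeVertex N) : TreeVertex N :=
  ⟨v.1.dropLast, by rw [List.length_dropLast]; exact Nat.sub_le_of_le_add (by omega)⟩

theorem parent_prefix (v : TreeVertex N) : (parent v).1 <+: v.1 := List.dropLast_prefix v.1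

theorem length_parent_lt {v : TreeVertex N} (hv : v ≠ root) :
    (parent v).1.length < v.1.length := by
  have : 0 < v.1.length := List.length_pos_iff.mpr fun h ↦ hv (Subtype.ext h)
  simp only [parent, List.length_dropLast]
  omega

theorem parent_ne {v : TreeVertex N} (hv : v ≠ root) : (parent v).1 ≠ v.1 :=
  fun h ↦ (length_parent_lt hv).ne (congrArg List.length h)

variable {B : Finset (TreeVertex N)}

theorem exists_prefix_mem_parent_notMem (hB : root ∉ B) (w : TreeVertex N) (hw : w ∈ B) :
    ∃ v ∈ B, parent v ∉ B ∧ v.1 <+: w.1 := by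
  by_cases hp : parent w ∈ B
  · obtain ⟨v, hv, hvp, hpre⟩ := exists_prefix_mem_parent_notMem hB (parent w) hp
    exact ⟨v, hv, hvp, hpre.trans (parent_prefix w)⟩
  · exact ⟨w, hw, hp, List.prefix_refl _⟩
termination_by w.1.length
decreasing_by exact length_parent_lt (ne_of_mem_of_not_mem hw hB)

theorem eq_append_of_eq_dropLast {v w : List Bool} (hne : w ≠ v) (h : w = v.dropLast) :
    v = w ++ [false] ∨ v = w ++ [true] := by
  have hv : v ≠ [] := by rintro rfl; exact hne h
  rw [h]
  rcases Bool.dichotomy (v.getLast hv) with hb | hb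
  · exact Or.inl (by rw [← hb, List.dropLast_append_getLast])
  · exact Or.inr (by rw [← hb, List.dropLast_append_getLast])

theorem adj_symm {v w : List Bool}
    (h : w ≠ v ∧ (w = v.dropLast ∨ w = v ++ [false] ∨ w = v ++ [true])) :
    v ≠ w ∧ (v = w.dropLast ∨ v = w ++ [false] ∨ v = w ++ [true]) := by
  obtain ⟨hne, hw | hw | hw⟩ := h
  · exact ⟨hne.symm, Or.inr (eq_append_of_eq_dropLast hne hw)⟩
  all_goals
    subst hw
    exact ⟨by simp, Or.inl List.dropLast_concat.symm⟩

end TreeVertex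

open TreeVertex

section Metropolis

variable {N : ℕ} {π : TreeVertex N → ℝ}

theorem mul_min_div_one {𝕜 : Type*} [Field 𝕜] [LinearOrder 𝕜] [IsStrictOrderedRing 𝕜] {a : 𝕜}
    (ha : 0 < a) (b : 𝕜) : a * min (b / a) 1 = min b a := by
  rw [mul_min_of_nonneg _ _ ha.le, mul_div_cancel₀ b ha.ne', mul_one]

theorem mul_metroProp_comm (hπ : ∀ v, 0 < π v) (v w : TreeVertex N) :
    π v * metroProp π v w = π w * metroProp π w v := by
  unfold metroProp
  by_cases h : w.1 ≠ v.1 ∧ (w.1 = v.1.dropLast ∨ w.1 = v.1 ++ [false] ∨ w.1 = v.1 ++ [true])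
  · rw [if_pos h, if_pos (adj_symm h), mul_left_comm, mul_left_comm (π w),
      mul_min_div_one (hπ v), mul_min_div_one (hπ w), min_comm]
  · rw [if_neg h, if_neg (mt adj_symm h), mul_zero, mul_zero]

theorem mul_metroK_comm (hπ : ∀ v, 0 < π v) (v w : TreeVertex N) :
    π v * metroK π v w = π w * metroK π w v := by
  by_cases h : w = v
  · rw [h]
  · rw [metroK, metroK, if_neg h, if_neg (Ne.symm h), mul_metroProp_comm hπ]

theorem metroK_nonneg_of_ne (hπ : ∀ v, 0 < π v) {v w : TreeVertex N} (h : w ≠ v) :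
    0 ≤ metroK π v w := by
  rw [metroK, if_neg h, metroProp]
  split_ifs
  · exact mul_nonneg (by norm_num) (le_min (div_nonneg (hπ w).le (hπ v).le) zero_le_one)
  · exact le_rfl

theorem mul_metroK_parent (hπ : ∀ v, 0 < π v) {v : TreeVertex N} (hv : v ≠ root) :
    π v * metroK π v (parent v) = 1 / 3 * min (π v) (π (parent v)) := by
  have hne : parent v ≠ v := fun h ↦ parent_ne hv (congrArg Subtype.val h)
  rw [metroK, if_neg hne, metroProp, if_pos ⟨parent_ne hv, Or.inl rfl⟩, mul_left_comm,
    mul_min_div_one (hπ v), min_comm]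

end Metropolis

section Cut

variable {N : ℕ} {π : TreeVertex N → ℝ}

open Classical in
noncomputable def descendants (S : Finset (TreeVertex N)) : Finset (TreeVertex N) :=
  univ.filter fun w ↦ ∃ v ∈ S, v.1 <+: w.1

variable (π) in
noncomputable def lighterEnd (v : TreeVertex N) : TreeVertex N :=
  if π v ≤ π (parent v) then v else parent v

theorem lighterEnd_prefix (v : TreeVertex N) : (lighterEnd π v).1 <+: v.1 := by
  unfold lighterEnd
  split_ifs
  · exact List.prefix_refl _
  · exact parent_prefix v

theorem apply_lighterEnd (π : TreeVertex N → ℝ) (v : TreeVertex N) :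
    π (lighterEnd π v) = min (π v) (π (parent v)) := by
  rw [lighterEnd, apply_ite π, min_def]

theorem exists_subset_descendants_flow_ge (hπ : ∀ v, 0 < π v) {B : Finset (TreeVertex N)}
    (hB : root ∉ B) :
    ∃ S : Finset (TreeVertex N),
      B ⊆ descendants S ∧ 1 / 3 * ∑ v ∈ S, π v ≤ ergodicFlow π (metroK π) B Bᶜ := by
  classical
  set E := B.filter fun v ↦ parent v ∉ B
  refine ⟨E.image (lighterEnd π), fun w hw ↦ ?_, ?_⟩
  · obtain ⟨v, hv, hvp, hpre⟩ := exists_prefix_mem_parent_notMem hB w hw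
    simp only [descendants, mem_filter, mem_univ, true_and]
    exact ⟨lighterEnd π v, mem_image_of_mem _ (mem_filter.mpr ⟨hv, hvp⟩),
      (lighterEnd_prefix v).trans hpre⟩
  have hflow_nonneg : ∀ v ∈ B, 0 ≤ π v * ∑ w ∈ Bᶜ, metroK π v w := fun v hv ↦
    mul_nonneg (hπ v).le <| sum_nonneg fun w hw ↦
      metroK_nonneg_of_ne hπ (ne_of_mem_of_not_mem hv (mem_compl.mp hw)).symm
  calc 1 / 3 * ∑ v ∈ E.image (lighterEnd π), π v
      ≤ 1 / 3 * ∑ v ∈ E, π (lighterEnd π v) := by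
        gcongr
        exact sum_image_le_of_nonneg fun v _ ↦ (hπ v).le
    _ = ∑ v ∈ E, π v * metroK π v (parent v) := by
        rw [mul_sum]
        refine sum_congr rfl fun v hv ↦ ?_
        rw [apply_lighterEnd π, mul_metroK_parent hπ (ne_of_mem_of_not_mem (mem_filter.mp hv).1 hB)]
    _ ≤ ∑ v ∈ E, π v * ∑ w ∈ Bᶜ, metroK π v w := by
        refine sum_le_sum fun v hv ↦ ?_
        obtain ⟨hvB, hpB⟩ := mem_filter.mp hv
        refine mul_le_mul_of_nonneg_left ?_ (hπ v).le
        exact single_le_sum (fun w hw ↦ metroK_nonneg_of_ne hπ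
          (ne_of_mem_of_not_mem hvB (mem_compl.mp hw)).symm)
          (mem_compl.mpr hpB)
    _ ≤ ergodicFlow π (metroK π) B Bᶜ :=
        sum_le_sum_of_subset_of_nonneg (filter_subset _ _) fun v hv _ ↦ hflow_nonneg v hv

end Cut

open Classical in
theorem tree_metropolis_sConductance_lower_bound_general
    (N : ℕ) (π : {l : List Bool // l.length ≤ N} → ℝ)
    (hπpos : ∀ v, 0 < π v) (hπsum : ∑ v, π v = 1)
    (s : ℝ)
    (A : Finset {l : List Bool // l.length ≤ N})
    (hA1 : s < ∑ v ∈ A, π v) (hA2 : ∑ v ∈ A, π v < 1 - s) :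
    sInf {r : ℝ | ∃ S : Finset {l : List Bool // l.length ≤ N},
        s < ∑ w ∈ Finset.univ.filter (fun w => ∃ v ∈ S, v.1 <+: w.1), π w ∧
        r = (1 / 3) * (∑ v ∈ S, π v) /
          ((∑ w ∈ Finset.univ.filter (fun w => ∃ v ∈ S, v.1 <+: w.1), π w) - s)}
      ≤ (∑ u ∈ A, π u * ∑ w ∈ Aᶜ, metroK π u w) /
          min ((∑ v ∈ A, π v) - s) ((∑ v ∈ Aᶜ, π v) - s) := by
  have hAc : ∑ v ∈ Aᶜ, π v = 1 - ∑ v ∈ A, π v := by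
    rw [← hπsum, ← sum_add_sum_compl A π, add_sub_cancel_left]
  obtain ⟨B, hroot, hB_min, hB_flow⟩ : ∃ B : Finset (TreeVertex N), root ∉ B ∧
      min ((∑ v ∈ A, π v) - s) ((∑ v ∈ Aᶜ, π v) - s) ≤ (∑ v ∈ B, π v) - s ∧
      ergodicFlow π (metroK π) B Bᶜ = ergodicFlow π (metroK π) A Aᶜ := by
    by_cases h : root ∈ A
    · exact ⟨Aᶜ, notMem_compl.mpr h, min_le_right _ _,
        by rw [compl_compl, ergodicFlow_comm (mul_metroK_comm hπpos)]⟩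
    · exact ⟨A, h, min_le_left _ _, rfl⟩
  obtain ⟨S, hBS, hS⟩ := exists_subset_descendants_flow_ge hπpos hroot
  have hB_le : ∑ v ∈ B, π v ≤ ∑ v ∈ descendants S, π v :=
    sum_le_sum_of_subset_of_nonneg hBS fun v _ _ ↦ (hπpos v).le
  have hmin_pos : 0 < min ((∑ v ∈ A, π v) - s) ((∑ v ∈ Aᶜ, π v) - s) :=
    lt_min (by linarith) (by linarith)
  have hmass_nonneg (S' : Finset (TreeVertex N)) : 0 ≤ 1 / 3 * ∑ v ∈ S', π v :=
    mul_nonneg (by norm_num) (sum_nonneg fun v _ ↦ (hπpos v).le)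
  refine csInf_le_of_le ⟨0, ?_⟩ ⟨S, lt_of_lt_of_le (by linarith) hB_le, rfl⟩ ?_
  · rintro _ ⟨S', hS', rfl⟩
    exact div_nonneg (hmass_nonneg S') (sub_nonneg.mpr hS'.le)
  rw [hB_flow] at hS
  exact div_le_div₀ ((hmass_nonneg S).trans hS) hS hmin_pos
    (hB_min.trans (sub_le_sub_right hB_le s))

open Classical in
/-- For the Metropolis chain on the binary tree `T_N` with positive target
distribution `π`, the `s`-conductance is bounded below by the infimum of
`(1/3)·π(S)/(π(Desc⁰(S)) − s)` over sets `S` of vertices with `π(Desc⁰(S)) > s`; that is,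
every measurable `A` with `s < π(A) < 1 − s` has conductance ratio at least this infimum. -/
theorem tree_metropolis_sConductance_lower_bound
    (N : ℕ) (π : {l : List Bool // l.length ≤ N} → ℝ)
    (hπpos : ∀ v, 0 < π v) (hπsum : ∑ v, π v = 1)
    (s : ℝ) (hs0 : 0 ≤ s) (hs : s < 1 / 2)
    (A : Finset {l : List Bool // l.length ≤ N})
    (hA1 : s < ∑ v ∈ A, π v) (hA2 : ∑ v ∈ A, π v < 1 - s) :
    sInf {r : ℝ | ∃ S : Finset {l : List Bool // l.length ≤ N},
        s < ∑ w ∈ Finset.univ.filter (fun w => ∃ v ∈ S, v.1 <+: w.1), π w ∧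
        r = (1 / 3) * (∑ v ∈ S, π v) /
          ((∑ w ∈ Finset.univ.filter (fun w => ∃ v ∈ S, v.1 <+: w.1), π w) - s)}
      ≤ (∑ u ∈ A, π u * ∑ w ∈ Aᶜ, metroK π u w) /
          min ((∑ v ∈ A, π v) - s) ((∑ v ∈ Aᶜ, π v) - s) :=
  tree_metropolis_sConductance_lower_bound_general N π hπpos hπsum s A hA1 hA2
end

section
/- Let X₁,…,X_k be i.i.d. copies of a nonnegative random variable X with P(X ≥ ε₁) ≥ ε₂ for some ε₁ > 0 and ε₂ > 0, and let p₁,…,p_k ≥ 0 with Σ_{j=1}^k p_j = 1. Then P( Σ_{j=1}^k p_j X_j ≤ ε₁ε₂/2 ) ≤ exp( −ε₂² / (2·max_j p_j) ). -/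
open MeasureTheory ProbabilityTheory

/-! Replace each `X_j` by the Bernoulli variable `ε₁ · 1{X_j ≥ ε₁} ≤ X_j`. The weighted sum of
the indicators has mean at least `ε₂`, so the event forces it `ε₂ / 2` below its mean, and
Hoeffding's inequality bounds this by `exp (-ε₂² / (2 ∑ p_j²))`; finally
`∑ p_j² ≤ max_j p_j · ∑ p_j = max_j p_j`. -/

lemma Finset.sum_sq_le_sup'_mul_sum {ι : Type*} {s : Finset ι} (hs : s.Nonempty) {p : ι → ℝ}
    (hp : ∀ i ∈ s, 0 ≤ p i) : ∑ i ∈ s, p i ^ 2 ≤ s.sup' hs p * ∑ i ∈ s, p i := by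
  rw [Finset.mul_sum]
  exact Finset.sum_le_sum fun i hi ↦ by
    rw [sq]
    exact mul_le_mul_of_nonneg_right (Finset.le_sup' p hi) (hp i hi)

lemma mul_indicator_Ici_le {c x : ℝ} (hx : 0 ≤ x) : c * (Set.Ici c).indicator 1 x ≤ x := by
  by_cases h : c ≤ x
  · simpa [Set.indicator_of_mem (Set.mem_Ici.2 h)] using h
  · simpa [Set.indicator_of_notMem (Set.notMem_Ici.2 (lt_of_not_ge h))] using hx

lemma sum_mul_indicator_Ici_le_of_sum_mul_le {ι : Type*} {s : Finset ι} {p x : ι → ℝ} {c δ : ℝ}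
    (hc : 0 < c) (hp : ∀ i ∈ s, 0 ≤ p i) (hx : ∀ i ∈ s, 0 ≤ x i)
    (h : ∑ i ∈ s, p i * x i ≤ c * δ) : ∑ i ∈ s, p i * (Set.Ici c).indicator 1 (x i) ≤ δ := by
  refine le_of_mul_le_mul_left ?_ hc
  calc c * ∑ i ∈ s, p i * (Set.Ici c).indicator 1 (x i)
      = ∑ i ∈ s, p i * (c * (Set.Ici c).indicator 1 (x i)) := by
        rw [Finset.mul_sum]
        exact Finset.sum_congr rfl fun i _ ↦ mul_left_comm _ _ _
    _ ≤ ∑ i ∈ s, p i * x i := Finset.sum_le_sum fun i hi ↦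
        mul_le_mul_of_nonneg_left (mul_indicator_Ici_le (hx i hi)) (hp i hi)
    _ ≤ c * δ := h

namespace ProbabilityTheory

/-- **Hoeffding's inequality**, lower tail. -/
lemma measureReal_sum_le_sum_integral_sub_le {Ω ι : Type*} [MeasurableSpace Ω] {μ : Measure Ω}
    {Y : ι → Ω → ℝ} {a b : ι → ℝ} {s : Finset ι} (hindep : iIndepFun Y μ)
    (hmeas : ∀ i ∈ s, AEMeasurable (Y i) μ) (hY : ∀ i ∈ s, ∀ᵐ ω ∂μ, Y i ω ∈ Set.Icc (a i) (b i))
    {ε : ℝ} (hε : 0 ≤ ε) :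
    μ.real {ω | ∑ i ∈ s, Y i ω ≤ ∑ i ∈ s, μ[Y i] - ε}
      ≤ Real.exp (-2 * ε ^ 2 / ∑ i ∈ s, (b i - a i) ^ 2) := by
  have := hindep.isProbabilityMeasure
  have hcentered : iIndepFun (fun i ω ↦ -(Y i ω - μ[Y i])) μ :=
    hindep.comp (fun i x ↦ -(x - ∫ ω, Y i ω ∂μ)) fun _ ↦ by fun_prop
  have hsubG : ∀ i ∈ s,
      HasSubgaussianMGF (fun ω ↦ -(Y i ω - μ[Y i])) ((‖b i - a i‖₊ / 2) ^ 2) μ :=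
    fun i hi ↦ (hasSubgaussianMGF_of_mem_Icc (hmeas i hi) (hY i hi)).neg
  have hevent : {ω | ∑ i ∈ s, Y i ω ≤ ∑ i ∈ s, μ[Y i] - ε}
      = {ω | ε ≤ ∑ i ∈ s, -(Y i ω - μ[Y i])} := by
    ext ω
    simp only [Set.mem_ofPred_eq, neg_sub, Finset.sum_sub_distrib]
    constructor <;> intro h <;> linarith
  have hparam : 2 * ∑ i ∈ s, (((‖b i - a i‖₊ / 2) ^ 2 : NNReal) : ℝ)
      = (∑ i ∈ s, (b i - a i) ^ 2) / 2 := by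
    rw [Finset.mul_sum, Finset.sum_div]
    refine Finset.sum_congr rfl fun i _ ↦ ?_
    push_cast
    rw [Real.norm_eq_abs, div_pow, sq_abs]
    ring
  calc μ.real {ω | ∑ i ∈ s, Y i ω ≤ ∑ i ∈ s, μ[Y i] - ε}
      ≤ Real.exp (-ε ^ 2 / (2 * ∑ i ∈ s, (((‖b i - a i‖₊ / 2) ^ 2 : NNReal) : ℝ))) := by
        rw [hevent]
        exact_mod_cast HasSubgaussianMGF.measure_sum_ge_le_of_iIndepFun hcentered hsubG hε
    _ = Real.exp (-2 * ε ^ 2 / ∑ i ∈ s, (b i - a i) ^ 2) := by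
        rw [hparam]
        ring_nf

lemma measureReal_sum_le_sum_integral_sub_le_of_sum_eq_one {Ω ι : Type*} [MeasurableSpace Ω]
    {μ : Measure Ω} {Y : ι → Ω → ℝ} {p : ι → ℝ} {s : Finset ι} (hs : s.Nonempty)
    (hindep : iIndepFun Y μ) (hmeas : ∀ i ∈ s, AEMeasurable (Y i) μ)
    (hY : ∀ i ∈ s, ∀ᵐ ω ∂μ, Y i ω ∈ Set.Icc 0 (p i)) (hp : ∀ i ∈ s, 0 ≤ p i)
    (hsum : ∑ i ∈ s, p i = 1) {ε : ℝ} (hε : 0 ≤ ε) :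
    μ.real {ω | ∑ i ∈ s, Y i ω ≤ ∑ i ∈ s, μ[Y i] - ε} ≤ Real.exp (-2 * ε ^ 2 / s.sup' hs p) := by
  have hsq_pos : 0 < ∑ i ∈ s, (p i - 0) ^ 2 := by
    obtain ⟨i, hi, hpi⟩ := Finset.exists_ne_zero_of_sum_ne_zero (hsum ▸ one_ne_zero)
    exact Finset.sum_pos' (fun i _ ↦ sq_nonneg _) ⟨i, hi, by positivity⟩
  have hsq_le : ∑ i ∈ s, (p i - 0) ^ 2 ≤ s.sup' hs p := by
    simpa [hsum] using Finset.sum_sq_le_sup'_mul_sum hs hp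
  calc _ ≤ Real.exp (-2 * ε ^ 2 / ∑ i ∈ s, (p i - 0) ^ 2) :=
        measureReal_sum_le_sum_integral_sub_le hindep hmeas hY hε
    _ ≤ Real.exp (-2 * ε ^ 2 / s.sup' hs p) := by
      simp only [neg_mul, neg_div]
      gcongr

lemma integral_mul_indicator_Ici_comp {Ω : Type*} [MeasurableSpace Ω] {μ : Measure Ω}
    {X : Ω → ℝ} (hX : Measurable X) (p c : ℝ) :
    μ[fun ω ↦ p * (Set.Ici c).indicator 1 (X ω)] = p * μ.real {ω | c ≤ X ω} := by
  rw [integral_const_mul, ← integral_indicator_one (measurableSet_le measurable_const hX)]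
  rfl

end ProbabilityTheory

theorem weighted_sum_lower_tail_general
    {Ω : Type*} [MeasurableSpace Ω] (P : Measure Ω) [IsProbabilityMeasure P]
    (k : ℕ) (hk : 0 < k)
    (Xs : Fin k → Ω → ℝ) (hmeas : ∀ j, Measurable (Xs j))
    (hnonneg : ∀ j ω, 0 ≤ Xs j ω)
    (hIndep : iIndepFun Xs P)
    (ε₁ ε₂ : ℝ) (hε₁ : 0 < ε₁) (hε₂ : 0 < ε₂)
    (htail : ∀ j, P {ω | ε₁ ≤ Xs j ω} ≥ ENNReal.ofReal ε₂)
    (ps : Fin k → ℝ) (hps : ∀ j, 0 ≤ ps j) (hsum : ∑ j, ps j = 1) :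
    P {ω | ∑ j, ps j * Xs j ω ≤ ε₁ * ε₂ / 2}
      ≤ ENNReal.ofReal (Real.exp (-ε₂ ^ 2 /
          (2 * Finset.univ.sup' ⟨⟨0, hk⟩, Finset.mem_univ _⟩ ps))) := by
  set φ : Fin k → ℝ → ℝ := fun j x ↦ ps j * (Set.Ici ε₁).indicator 1 x
  have hφ : ∀ j, Measurable (φ j) := fun j ↦
    (measurable_const.indicator measurableSet_Ici).const_mul (ps j)
  have hφ_mem : ∀ j ∈ Finset.univ, ∀ᵐ ω ∂P, φ j (Xs j ω) ∈ Set.Icc 0 (ps j) := fun j _ ↦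
    ae_of_all _ fun ω ↦ by by_cases h : ε₁ ≤ Xs j ω <;> simp [φ, h, hps j]
  have hmean : ε₂ ≤ ∑ j, P[φ j ∘ Xs j] := by
    calc ε₂ = ∑ j, ps j * ε₂ := by rw [← Finset.sum_mul, hsum, one_mul]
      _ ≤ ∑ j, P[φ j ∘ Xs j] := Finset.sum_le_sum fun j _ ↦ by
        rw [Function.comp_def, integral_mul_indicator_Ici_comp (hmeas j)]
        exact mul_le_mul_of_nonneg_left
          ((ENNReal.ofReal_le_iff_le_toReal (measure_ne_top _ _)).1 (htail j)) (hps j)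
  have hevent : {ω | ∑ j, ps j * Xs j ω ≤ ε₁ * ε₂ / 2}
      ⊆ {ω | ∑ j, φ j (Xs j ω) ≤ ∑ j, P[φ j ∘ Xs j] - ε₂ / 2} := fun ω hω ↦ by
    have := sum_mul_indicator_Ici_le_of_sum_mul_le hε₁ (fun j _ ↦ hps j) (fun j _ ↦ hnonneg j ω)
      (hω.trans_eq (mul_div_assoc _ _ _))
    simp only [Set.mem_ofPred_eq, φ]
    linarith
  calc P {ω | ∑ j, ps j * Xs j ω ≤ ε₁ * ε₂ / 2}
      ≤ P {ω | ∑ j, φ j (Xs j ω) ≤ ∑ j, P[φ j ∘ Xs j] - ε₂ / 2} := measure_mono hevent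
    _ ≤ ENNReal.ofReal (Real.exp (-2 * (ε₂ / 2) ^ 2 /
          Finset.univ.sup' ⟨⟨0, hk⟩, Finset.mem_univ _⟩ ps)) := by
      rw [← ofReal_measureReal]
      exact ENNReal.ofReal_le_ofReal <| measureReal_sum_le_sum_integral_sub_le_of_sum_eq_one _
        (hIndep.comp _ hφ) (fun j _ ↦ ((hφ j).comp (hmeas j)).aemeasurable) hφ_mem
        (fun j _ ↦ hps j) hsum (by positivity)
    _ = _ := by ring_nf

/-- For i.i.d. nonnegative random variables with `P(X ≥ ε₁) ≥ ε₂` and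
nonnegative weights summing to one,
`P(Σ p_j X_j ≤ ε₁ε₂/2) ≤ exp(−ε₂²/(2 max_j p_j))`. -/
theorem weighted_sum_lower_tail
    {Ω : Type*} [MeasurableSpace Ω] (P : Measure Ω) [IsProbabilityMeasure P]
    (k : ℕ) (hk : 0 < k)
    (Xs : Fin k → Ω → ℝ) (hmeas : ∀ j, Measurable (Xs j))
    (hnonneg : ∀ j ω, 0 ≤ Xs j ω)
    (hIndep : iIndepFun Xs P)
    (hIdent : ∀ i j, P.map (Xs i) = P.map (Xs j))
    (ε₁ ε₂ : ℝ) (hε₁ : 0 < ε₁) (hε₂ : 0 < ε₂)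
    (htail : ∀ j, P {ω | ε₁ ≤ Xs j ω} ≥ ENNReal.ofReal ε₂)
    (ps : Fin k → ℝ) (hps : ∀ j, 0 ≤ ps j) (hsum : ∑ j, ps j = 1) :
    P {ω | ∑ j, ps j * Xs j ω ≤ ε₁ * ε₂ / 2}
      ≤ ENNReal.ofReal (Real.exp (-ε₂ ^ 2 /
          (2 * Finset.univ.sup' ⟨⟨0, hk⟩, Finset.mem_univ _⟩ ps))) :=
  weighted_sum_lower_tail_general P k hk Xs hmeas hnonneg hIndep ε₁ ε₂ hε₁ hε₂ htail ps hps hsum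
end

section
/- Let X be a positive random variable with E X = 1, E[X^p] ≤ C for some p > 1 and C > 0, and P(X ≥ ε₁) ≥ ε₂ for some ε₁ > 0 and ε₂ > 0. Let X₁,…,X_k be i.i.d. copies of X, let p₁,…,p_k ≥ 0 with Σ_{j=1}^k p_j = 1, and for L ≥ 1 write h_L(x) = x·1_{x ≥ L}. Then: (i) for every ε > 0 and every L ≥ 1, P( (Σ_j p_j h_L(X_j)) / (Σ_j p_j X_j) ≥ ε ) ≤ exp( −ε₂²/(2·max_j p_j) ) + 4C/(ε·ε₁·ε₂·L^{p−1}); and (ii) for every L ≥ 1, E[ (Σ_j p_j h_L(X_j)) / (Σ_j p_j X_j) ] ≤ exp( −ε₂²/(2·max_j p_j) ) + 4C/(ε₁·ε₂·L^{p−1}). -/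
/-!
Write `S = ∑ pⱼ Xⱼ` and `N_L = ∑ pⱼ h_L(Xⱼ)`, so that `0 ≤ N_L ≤ S`. Since
`S ≥ ε₁ ∑ pⱼ 1{Xⱼ ≥ ε₁}` and the latter is a sum of independent terms in `[0, pⱼ]` with mean at
least `ε₂`, Hoeffding's inequality makes `S < ε₁ε₂/4` an event of probability at most
`exp(-ε₂²/(2 maxⱼ pⱼ))`. Off this event `N_L / S ≤ 4 N_L / (ε₁ε₂)`, while `E N_L ≤ C / L^(p-1)`
because `h_L(x) ≤ x^p / L^(p-1)`. Markov's inequality then gives (i), and `N_L / S ≤ 1` on the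
bad event gives (ii).
-/

open MeasureTheory ProbabilityTheory

section

variable {Ω : Type*} [MeasurableSpace Ω] {P : Measure Ω}

/-- The paper's `h_L(x) = x 1_{x ≥ L}`. -/
noncomputable def largePart (L x : ℝ) : ℝ := if L ≤ x then x else 0

section LargePart

variable {L x p : ℝ}

lemma largePart_nonneg (hL : 0 ≤ L) (x : ℝ) : 0 ≤ largePart L x := by
  unfold largePart
  split_ifs with h <;> linarith

lemma largePart_le (hx : 0 ≤ x) : largePart L x ≤ x := by
  unfold largePart
  split_ifs <;> linarith

lemma measurable_largePart (L : ℝ) : Measurable (largePart L) :=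
  Measurable.ite measurableSet_Ici measurable_id measurable_const

lemma ofReal_largePart_mul_rpow_le (hL : 0 < L) (hp : 1 ≤ p) (x : ℝ) :
    ENNReal.ofReal (largePart L x) * ENNReal.ofReal (L ^ (p - 1)) ≤ ENNReal.ofReal (x ^ p) := by
  unfold largePart
  split_ifs with h
  · have hx : 0 < x := hL.trans_le h
    rw [← ENNReal.ofReal_mul hx.le]
    refine ENNReal.ofReal_le_ofReal ?_
    calc x * L ^ (p - 1) ≤ x * x ^ (p - 1) := by gcongr
      _ = x ^ p := by rw [Real.rpow_sub_one hx.ne', mul_div_cancel₀ _ hx.ne']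
  · simp

variable {X : Ω → ℝ} {C : ℝ}

lemma lintegral_largePart_le (hL : 0 < L) (hp : 1 ≤ p)
    (hmom : ∫⁻ ω, ENNReal.ofReal (X ω ^ p) ∂P ≤ ENNReal.ofReal C) :
    ∫⁻ ω, ENNReal.ofReal (largePart L (X ω)) ∂P ≤ ENNReal.ofReal (C / L ^ (p - 1)) := by
  have hLp : 0 < L ^ (p - 1) := Real.rpow_pos_of_pos hL _
  rw [ENNReal.ofReal_div_of_pos hLp, ENNReal.le_div_iff_mul_le (Or.inl (by simpa using hLp))
    (Or.inl ENNReal.ofReal_ne_top), ← lintegral_mul_const' _ _ ENNReal.ofReal_ne_top]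
  exact (lintegral_mono fun ω ↦ ofReal_largePart_mul_rpow_le hL hp (X ω)).trans hmom

lemma integrable_largePart (hX : AEMeasurable X P) (hL : 0 < L) (hp : 1 ≤ p)
    (hmom : ∫⁻ ω, ENNReal.ofReal (X ω ^ p) ∂P ≤ ENNReal.ofReal C) :
    Integrable (fun ω ↦ largePart L (X ω)) P :=
  ⟨((measurable_largePart L).comp_aemeasurable hX).aestronglyMeasurable,
    (hasFiniteIntegral_iff_ofReal (ae_of_all _ fun ω ↦ largePart_nonneg hL.le (X ω))).2
      ((lintegral_largePart_le hL hp hmom).trans_lt ENNReal.ofReal_lt_top)⟩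

lemma integral_largePart_le (hX : AEMeasurable X P) (hL : 0 < L) (hp : 1 ≤ p) (hC : 0 ≤ C)
    (hmom : ∫⁻ ω, ENNReal.ofReal (X ω ^ p) ∂P ≤ ENNReal.ofReal C) :
    ∫ ω, largePart L (X ω) ∂P ≤ C / L ^ (p - 1) := by
  rw [integral_eq_lintegral_of_nonneg_ae (ae_of_all _ fun ω ↦ largePart_nonneg hL.le (X ω))
    ((measurable_largePart L).comp_aemeasurable hX).aestronglyMeasurable]
  exact ENNReal.toReal_le_of_le_ofReal (by positivity) (lintegral_largePart_le hL hp hmom)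

end LargePart

lemma integral_weighted_sum_le {ι : Type*} [Fintype ι] {f : ι → Ω → ℝ}
    (hf : ∀ j, Integrable (f j) P) {w : ι → ℝ} (hw : ∀ j, 0 ≤ w j) (hw1 : ∑ j, w j = 1)
    {B : ℝ} (hB : ∀ j, ∫ ω, f j ω ∂P ≤ B) :
    ∫ ω, ∑ j, w j * f j ω ∂P ≤ B := by
  rw [integral_finsetSum _ fun j _ ↦ (hf j).const_mul (w j)]
  calc ∑ j, ∫ ω, w j * f j ω ∂P = ∑ j, w j * ∫ ω, f j ω ∂P := by simp_rw [integral_const_mul]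
    _ ≤ ∑ j, w j * B := Finset.sum_le_sum fun j _ ↦ mul_le_mul_of_nonneg_left (hB j) (hw j)
    _ = B := by rw [← Finset.sum_mul, hw1, one_mul]

section Ratio

variable [IsFiniteMeasure P] {N S : Ω → ℝ} {δ : ℝ}

lemma measureReal_le_div_le (hN : Integrable N P) (hN0 : 0 ≤ᵐ[P] N) {ε : ℝ} (hε : 0 < ε)
    (hδ : 0 < δ) :
    P.real {ω | ε ≤ N ω / S ω} ≤ P.real {ω | S ω < δ} + (∫ ω, N ω ∂P) / (ε * δ) := by
  have hsub : {ω | ε ≤ N ω / S ω} ⊆ {ω | S ω < δ} ∪ {ω | ε * δ ≤ N ω} := by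
    intro ω hω
    by_cases hS : S ω < δ
    · exact Or.inl hS
    · rw [not_lt] at hS
      have hεS : ε * S ω ≤ N ω := (le_div_iff₀ (hδ.trans_le hS)).1 hω
      exact Or.inr ((mul_le_mul_of_nonneg_left hS hε.le).trans hεS)
  have hmarkov : P.real {ω | ε * δ ≤ N ω} ≤ (∫ ω, N ω ∂P) / (ε * δ) := by
    rw [le_div_iff₀ (by positivity), mul_comm]
    exact mul_meas_ge_le_integral_of_nonneg hN0 hN _
  calc P.real {ω | ε ≤ N ω / S ω}
      ≤ P.real ({ω | S ω < δ} ∪ {ω | ε * δ ≤ N ω}) := measureReal_mono hsub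
    _ ≤ P.real {ω | S ω < δ} + P.real {ω | ε * δ ≤ N ω} := measureReal_union_le _ _
    _ ≤ P.real {ω | S ω < δ} + (∫ ω, N ω ∂P) / (ε * δ) := by gcongr

lemma integral_div_le (hN : Integrable N P) (hS : Measurable S) (hN0 : 0 ≤ᵐ[P] N)
    (hNS : N ≤ᵐ[P] S) (hδ : 0 < δ) :
    ∫ ω, N ω / S ω ∂P ≤ P.real {ω | S ω < δ} + (∫ ω, N ω ∂P) / δ := by
  have hsmall : MeasurableSet {ω | S ω < δ} := hS measurableSet_Iio
  have hind : Integrable ({ω | S ω < δ}.indicator (1 : Ω → ℝ)) P :=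
    (integrable_const 1).indicator hsmall
  have hratio : ∀ᵐ ω ∂P, N ω / S ω ≤ {ω | S ω < δ}.indicator (1 : Ω → ℝ) ω + N ω / δ := by
    filter_upwards [hN0, hNS] with ω hN0ω hNSω
    by_cases hSδ : S ω < δ
    · rw [Set.indicator_of_mem (show ω ∈ {ω | S ω < δ} from hSδ), Pi.one_apply]
      have := div_le_one_of_le₀ hNSω (hN0ω.trans hNSω)
      have : 0 ≤ N ω / δ := div_nonneg hN0ω hδ.le
      linarith
    · rw [Set.indicator_of_notMem (show ω ∉ {ω | S ω < δ} from hSδ), zero_add]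
      exact div_le_div_of_nonneg_left hN0ω hδ (not_lt.1 hSδ)
  have hbound : ∀ᵐ ω ∂P, ‖N ω / S ω‖ ≤ 1 := by
    filter_upwards [hN0, hNS] with ω hN0ω hNSω
    rw [Real.norm_eq_abs, abs_of_nonneg (div_nonneg hN0ω (hN0ω.trans hNSω))]
    exact div_le_one_of_le₀ hNSω (hN0ω.trans hNSω)
  have hint : Integrable (fun ω ↦ N ω / S ω) P :=
    (integrable_const 1).mono' (hN.aemeasurable.div hS.aemeasurable).aestronglyMeasurable hbound
  calc ∫ ω, N ω / S ω ∂P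
      ≤ ∫ ω, ({ω | S ω < δ}.indicator (1 : Ω → ℝ) ω + N ω / δ) ∂P :=
        integral_mono_ae hint (by exact hind.add (hN.div_const δ)) hratio
    _ = P.real {ω | S ω < δ} + (∫ ω, N ω ∂P) / δ := by
        rw [integral_add hind (hN.div_const δ), integral_indicator_one hsmall, integral_div]

end Ratio

section WeightedLargePart

variable {ι : Type*} [Fintype ι] {X : ι → Ω → ℝ} {w : ι → ℝ} {p C L : ℝ}

lemma integrable_weighted_largePart (hX : ∀ j, Measurable (X j)) (hL : 0 < L) (hp : 1 ≤ p)
    (hmom : ∀ j, ∫⁻ ω, ENNReal.ofReal (X j ω ^ p) ∂P ≤ ENNReal.ofReal C) :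
    Integrable (fun ω ↦ ∑ j, w j * largePart L (X j ω)) P :=
  integrable_finsetSum _ fun j _ ↦
    (integrable_largePart (hX j).aemeasurable hL hp (hmom j)).const_mul (w j)

lemma integral_weighted_largePart_le (hX : ∀ j, Measurable (X j)) (hw : ∀ j, 0 ≤ w j)
    (hw1 : ∑ j, w j = 1) (hL : 0 < L) (hp : 1 ≤ p) (hC : 0 ≤ C)
    (hmom : ∀ j, ∫⁻ ω, ENNReal.ofReal (X j ω ^ p) ∂P ≤ ENNReal.ofReal C) :
    ∫ ω, ∑ j, w j * largePart L (X j ω) ∂P ≤ C / L ^ (p - 1) :=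
  integral_weighted_sum_le (fun j ↦ integrable_largePart (hX j).aemeasurable hL hp (hmom j))
    hw hw1 fun j ↦ integral_largePart_le (hX j).aemeasurable hL hp hC (hmom j)

lemma weighted_largePart_nonneg (hw : ∀ j, 0 ≤ w j) (hL : 0 ≤ L) (x : ι → ℝ) :
    0 ≤ ∑ j, w j * largePart L (x j) :=
  Finset.sum_nonneg fun j _ ↦ mul_nonneg (hw j) (largePart_nonneg hL _)

lemma weighted_largePart_le (hw : ∀ j, 0 ≤ w j) {x : ι → ℝ} (hx : ∀ j, 0 ≤ x j) :
    ∑ j, w j * largePart L (x j) ≤ ∑ j, w j * x j :=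
  Finset.sum_le_sum fun j _ ↦ mul_le_mul_of_nonneg_left (largePart_le (hx j)) (hw j)

variable [IsFiniteMeasure P] {δ : ℝ}

lemma measureReal_le_weighted_largePart_div_le (hX : ∀ j, Measurable (X j))
    (hw : ∀ j, 0 ≤ w j) (hw1 : ∑ j, w j = 1) (hL : 0 < L) (hp : 1 ≤ p) (hC : 0 ≤ C)
    (hmom : ∀ j, ∫⁻ ω, ENNReal.ofReal (X j ω ^ p) ∂P ≤ ENNReal.ofReal C) {ε : ℝ} (hε : 0 < ε)
    (hδ : 0 < δ) :
    P.real {ω | ε ≤ (∑ j, w j * largePart L (X j ω)) / ∑ j, w j * X j ω}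
      ≤ P.real {ω | ∑ j, w j * X j ω < δ} + C / L ^ (p - 1) / (ε * δ) := by
  refine (measureReal_le_div_le (integrable_weighted_largePart hX hL hp hmom)
    (ae_of_all _ fun ω ↦ weighted_largePart_nonneg hw hL.le fun j ↦ X j ω) hε hδ).trans ?_
  gcongr
  exact integral_weighted_largePart_le hX hw hw1 hL hp hC hmom

lemma integral_weighted_largePart_div_le (hX : ∀ j, Measurable (X j)) (hX0 : ∀ j, 0 ≤ᵐ[P] X j)
    (hw : ∀ j, 0 ≤ w j) (hw1 : ∑ j, w j = 1) (hL : 0 < L) (hp : 1 ≤ p) (hC : 0 ≤ C)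
    (hmom : ∀ j, ∫⁻ ω, ENNReal.ofReal (X j ω ^ p) ∂P ≤ ENNReal.ofReal C) (hδ : 0 < δ) :
    ∫ ω, (∑ j, w j * largePart L (X j ω)) / ∑ j, w j * X j ω ∂P
      ≤ P.real {ω | ∑ j, w j * X j ω < δ} + C / L ^ (p - 1) / δ := by
  have hNS : (fun ω ↦ ∑ j, w j * largePart L (X j ω)) ≤ᵐ[P] fun ω ↦ ∑ j, w j * X j ω := by
    filter_upwards [ae_all_iff.2 hX0] with ω hω
    exact weighted_largePart_le hw hω
  refine (integral_div_le (integrable_weighted_largePart hX hL hp hmom)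
    (Finset.measurable_sum _ fun j _ ↦ (hX j).const_mul (w j))
    (ae_of_all _ fun ω ↦ weighted_largePart_nonneg hw hL.le fun j ↦ X j ω) hNS hδ).trans ?_
  gcongr
  exact integral_weighted_largePart_le hX hw hw1 hL hp hC hmom

end WeightedLargePart

lemma measureReal_sum_le_sum_integral_sub_le [IsProbabilityMeasure P] {ι : Type*} [Fintype ι]
    {Y : ι → Ω → ℝ} (hY : ∀ j, AEMeasurable (Y j) P) (hindep : iIndepFun Y P)
    {a b : ι → ℝ} (hab : ∀ j, ∀ᵐ ω ∂P, Y j ω ∈ Set.Icc (a j) (b j)) {t : ℝ} (ht : 0 ≤ t) :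
    P.real {ω | ∑ j, Y j ω ≤ ∑ j, P[Y j] - t} ≤
      Real.exp (-2 * t ^ 2 / ∑ j, (b j - a j) ^ 2) := by
  have hdev : iIndepFun (fun j ω ↦ -(Y j ω - P[Y j])) P :=
    hindep.comp (fun j x ↦ -(x - ∫ ω, Y j ω ∂P)) fun j ↦ (measurable_id.sub_const _).neg
  have hoeffding := HasSubgaussianMGF.measure_sum_ge_le_of_iIndepFun hdev
    (c := fun j ↦ (‖b j - a j‖₊ / 2) ^ 2) (s := Finset.univ)
    (fun j _ ↦ (hasSubgaussianMGF_of_mem_Icc (hY j) (hab j)).neg) ht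
  have hset : {ω | ∑ j, Y j ω ≤ ∑ j, P[Y j] - t} = {ω | t ≤ ∑ j, -(Y j ω - P[Y j])} := by
    ext ω
    simp only [Set.mem_ofPred_eq, neg_sub, Finset.sum_sub_distrib]
    constructor <;> intro h <;> linarith
  have hvar : ((∑ j, (‖b j - a j‖₊ / 2) ^ 2 : NNReal) : ℝ) = (∑ j, (b j - a j) ^ 2) / 4 := by
    push_cast
    simp only [Real.norm_eq_abs, div_pow, sq_abs, Finset.sum_div]
    norm_num
  rw [hset]
  refine hoeffding.trans_eq ?_
  rw [hvar]
  ring_nf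

section Concentration

variable [IsProbabilityMeasure P] {ι : Type*} [Fintype ι] {X : ι → Ω → ℝ} {w : ι → ℝ} {q M : ℝ}

lemma measureReal_weighted_indicator_sum_le (hX : ∀ j, Measurable (X j))
    (hindep : iIndepFun X P) {s : Set ℝ} (hs : MeasurableSet s) (hq : 0 ≤ q)
    (htail : ∀ j, ENNReal.ofReal q ≤ P (X j ⁻¹' s)) (hw : ∀ j, 0 ≤ w j) (hw1 : ∑ j, w j = 1)
    (hM : ∀ j, w j ≤ M) :
    P.real {ω | ∑ j, w j * s.indicator 1 (X j ω) ≤ q / 4} ≤ Real.exp (-q ^ 2 / (2 * M)) := by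
  set Y : ι → Ω → ℝ := fun j ω ↦ w j * s.indicator 1 (X j ω)
  have hg : ∀ j, Measurable fun x : ℝ ↦ w j * s.indicator 1 x :=
    fun j ↦ (measurable_const.indicator hs).const_mul (w j)
  have hY : ∀ j, Measurable (Y j) := fun j ↦ (hg j).comp (hX j)
  have hrange : ∀ j, ∀ᵐ ω ∂P, Y j ω ∈ Set.Icc 0 (w j) := fun j ↦ ae_of_all _ fun ω ↦ by
    by_cases h : X j ω ∈ s <;> simp [Y, h, hw j]
  have hmean : ∀ j, w j * q ≤ P[Y j] := fun j ↦ by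
    have hpre : (fun ω ↦ s.indicator (1 : ℝ → ℝ) (X j ω)) = (X j ⁻¹' s).indicator 1 := by
      ext ω; by_cases h : X j ω ∈ s <;> simp [h]
    simp only [Y, integral_const_mul, hpre, integral_indicator_one (hX j hs)]
    exact mul_le_mul_of_nonneg_left
      ((ENNReal.ofReal_le_iff_le_toReal (measure_ne_top _ _)).1 (htail j)) (hw j)
  have hsum_mean : q ≤ ∑ j, P[Y j] := by
    calc q = ∑ j, w j * q := by rw [← Finset.sum_mul, hw1, one_mul]
      _ ≤ ∑ j, P[Y j] := Finset.sum_le_sum fun j _ ↦ hmean j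
  have hvar_pos : 0 < ∑ j, w j ^ 2 := by
    obtain ⟨j, -, hj⟩ := Finset.exists_ne_zero_of_sum_ne_zero (hw1.trans_ne one_ne_zero)
    exact Finset.sum_pos' (fun j _ ↦ sq_nonneg _) ⟨j, Finset.mem_univ j, by positivity⟩
  have hvar_le : ∑ j, w j ^ 2 ≤ M := by
    calc ∑ j, w j ^ 2 ≤ ∑ j, w j * M :=
          Finset.sum_le_sum fun j _ ↦ by rw [sq]; exact mul_le_mul_of_nonneg_left (hM j) (hw j)
      _ = M := by rw [← Finset.sum_mul, hw1, one_mul]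
  calc P.real {ω | ∑ j, Y j ω ≤ q / 4}
      ≤ P.real {ω | ∑ j, Y j ω ≤ ∑ j, P[Y j] - 3 * q / 4} := by
        refine measureReal_mono fun ω hω ↦ ?_
        simp only [Set.mem_ofPred_eq] at hω ⊢
        linarith
    _ ≤ Real.exp (-2 * (3 * q / 4) ^ 2 / ∑ j, (w j - 0) ^ 2) :=
        measureReal_sum_le_sum_integral_sub_le (fun j ↦ (hY j).aemeasurable)
          (hindep.comp _ hg) hrange (by positivity)
    _ ≤ Real.exp (-q ^ 2 / (2 * M)) := by
        rw [Real.exp_le_exp]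
        simp only [sub_zero]
        rw [div_le_div_iff₀ hvar_pos (by linarith)]
        nlinarith [mul_le_mul_of_nonneg_left hvar_le (sq_nonneg q)]

lemma measureReal_weighted_sum_lt_le (hX : ∀ j, Measurable (X j)) (hindep : iIndepFun X P)
    (hX0 : ∀ j, 0 ≤ᵐ[P] X j) {a : ℝ} (ha : 0 < a) (hq : 0 ≤ q)
    (htail : ∀ j, ENNReal.ofReal q ≤ P {ω | a ≤ X j ω}) (hw : ∀ j, 0 ≤ w j)
    (hw1 : ∑ j, w j = 1) (hM : ∀ j, w j ≤ M) :
    P.real {ω | ∑ j, w j * X j ω < a * q / 4} ≤ Real.exp (-q ^ 2 / (2 * M)) := by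
  have hsub : {ω | ∑ j, w j * X j ω < a * q / 4}
      ≤ᵐ[P] {ω | ∑ j, w j * (Set.Ici a).indicator 1 (X j ω) ≤ q / 4} := by
    filter_upwards [ae_all_iff.2 hX0] with ω hω (hsmall : _ < _)
    have hcount : a * ∑ j, w j * (Set.Ici a).indicator 1 (X j ω) ≤ ∑ j, w j * X j ω := by
      rw [Finset.mul_sum]
      refine Finset.sum_le_sum fun j _ ↦ ?_
      by_cases h : a ≤ X j ω
      · simpa [h, mul_comm a] using mul_le_mul_of_nonneg_left h (hw j)
      · simpa [h] using mul_nonneg (hw j) (hω j)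
    show _ ≤ _
    by_contra! h
    nlinarith
  calc P.real {ω | ∑ j, w j * X j ω < a * q / 4}
      ≤ P.real {ω | ∑ j, w j * (Set.Ici a).indicator 1 (X j ω) ≤ q / 4} :=
        ENNReal.toReal_mono (measure_ne_top _ _) (measure_mono_ae hsub)
    _ ≤ Real.exp (-q ^ 2 / (2 * M)) :=
        measureReal_weighted_indicator_sum_le hX hindep measurableSet_Ici hq htail hw hw1 hM

end Concentration

end

theorem weighted_large_part_contribution_general
    {Ω : Type*} [MeasurableSpace Ω] (P : Measure Ω) [IsProbabilityMeasure P]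
    (k : ℕ) (hk : 0 < k)
    (Xs : Fin k → Ω → ℝ) (hmeas : ∀ j, Measurable (Xs j))
    (hpos : ∀ j, ∀ᵐ ω ∂P, 0 < Xs j ω)
    (hIndep : iIndepFun Xs P)
    (p : ℝ) (hp : 1 < p) (C : ℝ) (hC : 0 < C)
    (hmom : ∀ j, ∫⁻ ω, ENNReal.ofReal (Xs j ω ^ p) ∂P ≤ ENNReal.ofReal C)
    (ε₁ ε₂ : ℝ) (hε₁ : 0 < ε₁) (hε₂ : 0 < ε₂)
    (htail : ∀ j, P {ω | ε₁ ≤ Xs j ω} ≥ ENNReal.ofReal ε₂)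
    (ps : Fin k → ℝ) (hps : ∀ j, 0 ≤ ps j) (hsum : ∑ j, ps j = 1) :
    (∀ ε : ℝ, 0 < ε → ∀ L : ℝ, 1 ≤ L →
      P {ω | ε ≤ (∑ j, ps j * (if L ≤ Xs j ω then Xs j ω else 0)) / (∑ j, ps j * Xs j ω)}
        ≤ ENNReal.ofReal
            (Real.exp (-ε₂ ^ 2 / (2 * Finset.univ.sup' ⟨⟨0, hk⟩, Finset.mem_univ _⟩ ps))
              + 4 * C / (ε * ε₁ * ε₂ * L ^ (p - 1)))) ∧
    (∀ L : ℝ, 1 ≤ L →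
      ∫ ω, (∑ j, ps j * (if L ≤ Xs j ω then Xs j ω else 0)) / (∑ j, ps j * Xs j ω) ∂P
        ≤ Real.exp (-ε₂ ^ 2 / (2 * Finset.univ.sup' ⟨⟨0, hk⟩, Finset.mem_univ _⟩ ps))
            + 4 * C / (ε₁ * ε₂ * L ^ (p - 1))) := by
  set M := Finset.univ.sup' ⟨⟨0, hk⟩, Finset.mem_univ _⟩ ps
  have hX0 : ∀ j, 0 ≤ᵐ[P] Xs j := fun j ↦ (hpos j).mono fun _ h ↦ h.le
  have hδ : 0 < ε₁ * ε₂ / 4 := by positivity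
  have hsmall : P.real {ω | ∑ j, ps j * Xs j ω < ε₁ * ε₂ / 4} ≤ Real.exp (-ε₂ ^ 2 / (2 * M)) := by
    simpa only [mul_div_assoc] using measureReal_weighted_sum_lt_le hmeas hIndep hX0 hε₁ hε₂.le
      htail hps hsum fun j ↦ Finset.le_sup' ps (Finset.mem_univ j)
  refine ⟨fun ε hε L hL ↦ ?_, fun L hL ↦ ?_⟩ <;> have hL0 : 0 < L := zero_lt_one.trans_le hL
  · have := Real.rpow_pos_of_pos hL0 (p - 1)
    rw [← ofReal_measureReal]
    refine ENNReal.ofReal_le_ofReal (((measureReal_le_weighted_largePart_div_le hmeas hps hsum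
      hL0 hp.le hC.le hmom hε hδ).trans (add_le_add hsmall le_rfl)).trans_eq ?_)
    field_simp
  · have := Real.rpow_pos_of_pos hL0 (p - 1)
    refine ((integral_weighted_largePart_div_le hmeas hX0 hps hsum hL0 hp.le hC.le hmom
      hδ).trans (add_le_add hsmall le_rfl)).trans_eq ?_
    field_simp

/-- For i.i.d. positive random variables with mean one, a `p`-th moment
bound and an anti-concentration bound, the relative contribution of the large terms
`h_L(X_j) = X_j 1_{X_j ≥ L}` to a weighted average is small, both with high probability
and in expectation. -/
theorem weighted_large_part_contribution
    {Ω : Type*} [MeasurableSpace Ω] (P : Measure Ω) [IsProbabilityMeasure P]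
    (k : ℕ) (hk : 0 < k)
    (Xs : Fin k → Ω → ℝ) (hmeas : ∀ j, Measurable (Xs j))
    (hpos : ∀ j, ∀ᵐ ω ∂P, 0 < Xs j ω)
    (hIndep : iIndepFun Xs P)
    (hIdent : ∀ i j, P.map (Xs i) = P.map (Xs j))
    (hint : ∀ j, Integrable (Xs j) P) (hmean : ∀ j, ∫ ω, Xs j ω ∂P = 1)
    (p : ℝ) (hp : 1 < p) (C : ℝ) (hC : 0 < C)
    (hmom : ∀ j, ∫⁻ ω, ENNReal.ofReal (Xs j ω ^ p) ∂P ≤ ENNReal.ofReal C)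
    (ε₁ ε₂ : ℝ) (hε₁ : 0 < ε₁) (hε₂ : 0 < ε₂)
    (htail : ∀ j, P {ω | ε₁ ≤ Xs j ω} ≥ ENNReal.ofReal ε₂)
    (ps : Fin k → ℝ) (hps : ∀ j, 0 ≤ ps j) (hsum : ∑ j, ps j = 1) :
    (∀ ε : ℝ, 0 < ε → ∀ L : ℝ, 1 ≤ L →
      P {ω | ε ≤ (∑ j, ps j * (if L ≤ Xs j ω then Xs j ω else 0)) / (∑ j, ps j * Xs j ω)}
        ≤ ENNReal.ofReal
            (Real.exp (-ε₂ ^ 2 / (2 * Finset.univ.sup' ⟨⟨0, hk⟩, Finset.mem_univ _⟩ ps))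
              + 4 * C / (ε * ε₁ * ε₂ * L ^ (p - 1)))) ∧
    (∀ L : ℝ, 1 ≤ L →
      ∫ ω, (∑ j, ps j * (if L ≤ Xs j ω then Xs j ω else 0)) / (∑ j, ps j * Xs j ω) ∂P
        ≤ Real.exp (-ε₂ ^ 2 / (2 * Finset.univ.sup' ⟨⟨0, hk⟩, Finset.mem_univ _⟩ ps))
            + 4 * C / (ε₁ * ε₂ * L ^ (p - 1))) :=
  weighted_large_part_contribution_general P k hk Xs hmeas hpos hIndep p hp C hC hmom ε₁ ε₂ hε₁ hε₂
    htail ps hps hsum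
end
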